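/- arXiv:2010.00167 — 7 statements merged into one kernel-verified Lean document; each statement's English description precedes it below -/
import Mathlib

section
/- Let (x₁,y₁) and (x₂,y₂) be dyadic points in [0,1]² with x₁ < x₂ and y₁ < y₂, and suppose y₂ − y₁ ≥ x₂ − x₁ and (y₂−y₁)/(x₂−x₁) ≠ 2^k for every integer k. Then there exists a dyadic point (x₃,y₃) with x₁ < x₃ < x₂ and y₁ < y₃ < y₂ such that (y₃−y₁)/(x₃−x₁) = 2^{k₁} and (y₂−y₃)/(x₂−x₃) = 2^{k₂} for some non-negative integers k₁, k₂. -/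
open Set

/-- A real number is dyadic if it is an integer divided by a power of 2. -/
def IsDyadic (x : ℝ) : Prop := ∃ (z : ℤ) (n : ℕ), x = (z : ℝ) / 2 ^ n

/-!
If the slope `s` of the segment is at least `1` but not a power of `2`, then `2 ^ k < s < 2 ^ (k + 1)`
for some `k : ℕ`. Replace the segment by a broken line that first rises with slope `2 ^ (k + 1)` and then
with slope `2 ^ k`; its kink lies `u = (Δy - 2 ^ k Δx) / 2 ^ k` to the right of the first point. Since dyadic
rationals form a ring closed under halving, `u` and hence the kink are dyadic.
-/

namespace IsDyadic

lemma add {a b : ℝ} (ha : IsDyadic a) (hb : IsDyadic b) : IsDyadic (a + b) := by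
  obtain ⟨z, n, rfl⟩ := ha
  obtain ⟨w, m, rfl⟩ := hb
  refine ⟨z * 2 ^ m + w * 2 ^ n, n + m, ?_⟩
  push_cast
  rw [pow_add]
  field_simp

lemma sub {a b : ℝ} (ha : IsDyadic a) (hb : IsDyadic b) : IsDyadic (a - b) := by
  obtain ⟨z, n, rfl⟩ := ha
  obtain ⟨w, m, rfl⟩ := hb
  refine ⟨z * 2 ^ m - w * 2 ^ n, n + m, ?_⟩
  push_cast
  rw [pow_add]
  field_simp

lemma mul {a b : ℝ} (ha : IsDyadic a) (hb : IsDyadic b) : IsDyadic (a * b) := by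
  obtain ⟨z, n, rfl⟩ := ha
  obtain ⟨w, m, rfl⟩ := hb
  refine ⟨z * w, n + m, ?_⟩
  push_cast
  rw [pow_add]
  field_simp

lemma div_two_pow {a : ℝ} (ha : IsDyadic a) (k : ℕ) : IsDyadic (a / 2 ^ k) := by
  obtain ⟨z, n, rfl⟩ := ha
  refine ⟨z, n + k, ?_⟩
  rw [pow_add]
  field_simp

end IsDyadic

lemma isDyadic_two_pow (k : ℕ) : IsDyadic (2 ^ k) :=
  ⟨2 ^ k, 0, by push_cast; ring⟩

/-- The horizontal offset from `(x₁, y₁)` of the kink of the broken line from `(x₁, y₁)` to `(x₂, y₂)`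
that has slope `q` on its first piece and slope `p` on its second. -/
noncomputable def kinkOffset (x₁ y₁ x₂ y₂ p q : ℝ) : ℝ :=
  ((y₂ - y₁) - p * (x₂ - x₁)) / (q - p)

section Kink

variable {x₁ y₁ x₂ y₂ p q : ℝ}

lemma kinkOffset_pos (hpq : p < q) (hp : p * (x₂ - x₁) < y₂ - y₁) :
    0 < kinkOffset x₁ y₁ x₂ y₂ p q :=
  div_pos (by linarith) (by linarith)

lemma kinkOffset_lt (hpq : p < q) (hq : y₂ - y₁ < q * (x₂ - x₁)) :
    kinkOffset x₁ y₁ x₂ y₂ p q < x₂ - x₁ := by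
  rw [kinkOffset, div_lt_iff₀ (by linarith)]
  linarith

lemma sub_kink_eq (hpq : p < q) :
    y₂ - (y₁ + q * kinkOffset x₁ y₁ x₂ y₂ p q) = p * (x₂ - (x₁ + kinkOffset x₁ y₁ x₂ y₂ p q)) := by
  rw [kinkOffset]
  field_simp [sub_ne_zero.mpr hpq.ne']
  ring

lemma kink_spec (hx : x₁ < x₂) (hp₀ : 0 < p) (hp : p * (x₂ - x₁) < y₂ - y₁)
    (hq : y₂ - y₁ < q * (x₂ - x₁)) :
    let u := kinkOffset x₁ y₁ x₂ y₂ p q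
    x₁ < x₁ + u ∧ x₁ + u < x₂ ∧ y₁ < y₁ + q * u ∧ y₁ + q * u < y₂ ∧
      (y₁ + q * u - y₁) / (x₁ + u - x₁) = q ∧ (y₂ - (y₁ + q * u)) / (x₂ - (x₁ + u)) = p := by
  intro u
  have hpq : p < q := lt_of_mul_lt_mul_right (hp.trans hq) (sub_pos.mpr hx).le
  have hu₀ : 0 < u := kinkOffset_pos hpq hp
  have hu : u < x₂ - x₁ := kinkOffset_lt hpq hq
  have hrest : y₂ - (y₁ + q * u) = p * (x₂ - (x₁ + u)) := sub_kink_eq hpq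
  have hgap : 0 < x₂ - (x₁ + u) := by linarith
  refine ⟨by linarith, by linarith, by nlinarith, by nlinarith, ?_, ?_⟩
  · rw [add_sub_cancel_left, add_sub_cancel_left, mul_div_cancel_right₀ _ hu₀.ne']
  · rw [hrest, mul_div_cancel_right₀ _ hgap.ne']

end Kink

lemma exists_two_pow_lt_lt_two_pow_succ {s : ℝ} (hs : 1 ≤ s) (hne : ∀ k : ℕ, s ≠ 2 ^ k) :
    ∃ k : ℕ, 2 ^ k < s ∧ s < 2 ^ (k + 1) := by
  obtain ⟨k, hle, hlt⟩ := exists_nat_pow_near hs one_lt_two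
  exact ⟨k, lt_of_le_of_ne hle (hne k).symm, hlt⟩

theorem stmt_2_general (x₁ y₁ x₂ y₂ : ℝ)
    (hdx₁ : IsDyadic x₁) (hdy₁ : IsDyadic y₁)
    (hdx₂ : IsDyadic x₂) (hdy₂ : IsDyadic y₂)
    (hxlt : x₁ < x₂)
    (hge : x₂ - x₁ ≤ y₂ - y₁)
    (hnot : ∀ k : ℤ, (y₂ - y₁) / (x₂ - x₁) ≠ 2 ^ k) :
    ∃ x₃ y₃ : ℝ, IsDyadic x₃ ∧ IsDyadic y₃ ∧
      x₁ < x₃ ∧ x₃ < x₂ ∧ y₁ < y₃ ∧ y₃ < y₂ ∧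
      ∃ k₁ k₂ : ℕ, (y₃ - y₁) / (x₃ - x₁) = 2 ^ k₁ ∧ (y₂ - y₃) / (x₂ - x₃) = 2 ^ k₂ := by
  have hdx : 0 < x₂ - x₁ := sub_pos.mpr hxlt
  obtain ⟨k, hlow, hhigh⟩ := exists_two_pow_lt_lt_two_pow_succ ((one_le_div hdx).mpr hge)
    fun k h => hnot k (by rw [h, zpow_natCast])
  rw [lt_div_iff₀ hdx] at hlow
  rw [div_lt_iff₀ hdx] at hhigh
  obtain ⟨h₁, h₂, h₃, h₄, hslope₁, hslope₂⟩ := kink_spec hxlt (by positivity) hlow hhigh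
  set u := kinkOffset x₁ y₁ x₂ y₂ (2 ^ k) (2 ^ (k + 1))
  have hu : u = ((y₂ - y₁) - 2 ^ k * (x₂ - x₁)) / 2 ^ k := by
    simp only [u, kinkOffset]
    ring
  have hdu : IsDyadic u := by
    rw [hu]
    exact ((hdy₂.sub hdy₁).sub ((isDyadic_two_pow k).mul (hdx₂.sub hdx₁))).div_two_pow k
  exact ⟨x₁ + u, y₁ + 2 ^ (k + 1) * u, hdx₁.add hdu, hdy₁.add ((isDyadic_two_pow _).mul hdu),
    h₁, h₂, h₃, h₄, k + 1, k, hslope₁, hslope₂⟩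

theorem stmt_2 (x₁ y₁ x₂ y₂ : ℝ)
    (hx₁ : x₁ ∈ Icc (0:ℝ) 1) (hy₁ : y₁ ∈ Icc (0:ℝ) 1)
    (hx₂ : x₂ ∈ Icc (0:ℝ) 1) (hy₂ : y₂ ∈ Icc (0:ℝ) 1)
    (hdx₁ : IsDyadic x₁) (hdy₁ : IsDyadic y₁)
    (hdx₂ : IsDyadic x₂) (hdy₂ : IsDyadic y₂)
    (hxlt : x₁ < x₂) (hylt : y₁ < y₂)
    (hge : x₂ - x₁ ≤ y₂ - y₁)
    (hnot : ∀ k : ℤ, (y₂ - y₁) / (x₂ - x₁) ≠ 2 ^ k) :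
    ∃ x₃ y₃ : ℝ, IsDyadic x₃ ∧ IsDyadic y₃ ∧
      x₁ < x₃ ∧ x₃ < x₂ ∧ y₁ < y₃ ∧ y₃ < y₂ ∧
      ∃ k₁ k₂ : ℕ, (y₃ - y₁) / (x₃ - x₁) = 2 ^ k₁ ∧ (y₂ - y₃) / (x₂ - x₃) = 2 ^ k₂ :=
  stmt_2_general x₁ y₁ x₂ y₂ hdx₁ hdy₁ hdx₂ hdy₂ hxlt hge hnot
end

section
/- Let g : [0,1] → [0,1] be continuous, surjective, piecewise affine with finitely many breakpoints all having dyadic x-coordinates, with derivatives of absolute value an integer power of 2 on each affine piece. Then for any dyadic number c ∈ [0,1], the forward orbit {gⁿ(c) : n ≥ 0} is finite; in particular there exist integers n > m ≥ 0 with gⁿ(c) = g^m(c), i.e., c is preperiodic. -/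
open Set MeasureTheory

/-- Membership in the Lebesgue-measure-preserving Thompson monoid 𝔾:
continuous, onto `[0,1]`, Lebesgue measure preserving, piecewise affine with
finitely many pieces, dyadic breakpoints, and slopes `±2^k` for integers `k`. -/
def InG (g : ℝ → ℝ) : Prop :=
  ContinuousOn g (Icc 0 1) ∧
  MapsTo g (Icc (0:ℝ) 1) (Icc (0:ℝ) 1) ∧
  SurjOn g (Icc (0:ℝ) 1) (Icc (0:ℝ) 1) ∧
  (∀ A ⊆ Icc (0:ℝ) 1, MeasurableSet A →
    MeasureTheory.volume (g ⁻¹' A ∩ Icc 0 1) = MeasureTheory.volume A) ∧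
  ∃ (n : ℕ) (p : ℕ → ℝ), 0 < n ∧ p 0 = 0 ∧ p n = 1 ∧
    (∀ i < n, p i < p (i + 1)) ∧ (∀ i ≤ n, IsDyadic (p i)) ∧
    ∀ i < n, ∃ (k : ℤ) (ε b : ℝ), (ε = 1 ∨ ε = -1) ∧
      ∀ x ∈ Icc (p i) (p (i + 1)), g x = ε * 2 ^ k * x + b

lemma rescale (z : ℤ) {m N : ℕ} (h : m ≤ N) :
    ((z:ℝ))/2^m = ((z * 2^(N-m) : ℤ):ℝ)/2^N := by
  have h2 : (2:ℝ)^(N-m) * 2^m = 2^N := by rw [← pow_add, Nat.sub_add_cancel h]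
  push_cast
  rw [div_eq_div_iff (by positivity) (by positivity), ← h2]
  ring

lemma isDyadic_zpow (z : ℤ) (m : ℤ) : IsDyadic ((z:ℝ) * 2 ^ m) := by
  rcases le_or_gt 0 m with h | h
  · refine ⟨z * 2 ^ m.toNat, 0, ?_⟩
    push_cast
    rw [← zpow_natCast (2:ℝ) m.toNat, Int.toNat_of_nonneg h]
    ring
  · refine ⟨z, (-m).toNat, ?_⟩
    rw [div_eq_mul_inv, ← zpow_natCast (2:ℝ) (-m).toNat, Int.toNat_of_nonneg (by omega : (0:ℤ) ≤ -m),
      ← zpow_neg, neg_neg]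

lemma isDyadic_repr {x : ℝ} (h : IsDyadic x) : ∃ (z m : ℤ), x = (z:ℝ) * 2 ^ m := by
  obtain ⟨z, n, rfl⟩ := h
  exact ⟨z, -n, by rw [zpow_neg, zpow_natCast, div_eq_mul_inv]⟩

lemma IsDyadic.add_s4 {x y : ℝ} (hx : IsDyadic x) (hy : IsDyadic y) : IsDyadic (x + y) := by
  obtain ⟨z1, n1, rfl⟩ := hx
  obtain ⟨z2, n2, rfl⟩ := hy
  refine ⟨z1 * 2 ^ (n1 + n2 - n1) + z2 * 2 ^ (n1 + n2 - n2), n1 + n2, ?_⟩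
  rw [rescale z1 (Nat.le_add_right n1 n2), rescale z2 (Nat.le_add_left n2 n1)]
  push_cast
  ring

lemma IsDyadic.neg {x : ℝ} (hx : IsDyadic x) : IsDyadic (-x) := by
  obtain ⟨z, n, rfl⟩ := hx
  exact ⟨-z, n, by push_cast; ring⟩

lemma IsDyadic.mul_zpow {x : ℝ} (k : ℤ) (hx : IsDyadic x) : IsDyadic (2 ^ k * x) := by
  obtain ⟨z, m, rfl⟩ := isDyadic_repr hx
  have : (2:ℝ)^k * ((z:ℝ) * 2^m) = (z:ℝ) * 2^(m+k) := by
    rw [zpow_add₀ (two_ne_zero)]; ring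
  rw [this]; exact isDyadic_zpow z (m+k)

theorem stmt_4 (g : ℝ → ℝ) (hg : InG g)
    (c : ℝ) (hc : c ∈ Icc (0:ℝ) 1) (hcd : IsDyadic c) :
    (Set.range fun n : ℕ => g^[n] c).Finite ∧
    ∃ n m : ℕ, m < n ∧ g^[n] c = g^[m] c := by
  obtain ⟨hcont, hmaps, hsurj, hmeas, n, p, hn, hp0, hpn, hplt, hpd, hpiece⟩ := hg
  -- total choice functions for the pieces
  have hpiece' : ∀ i : ℕ, ∃ (k : ℤ) (ε b : ℝ), (ε = 1 ∨ ε = -1) ∧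
      (i < n → ∀ x ∈ Icc (p i) (p (i+1)), g x = ε * 2 ^ k * x + b) := by
    intro i
    by_cases h : i < n
    · obtain ⟨k, ε, b, hε, hfm⟩ := hpiece i h
      exact ⟨k, ε, b, hε, fun _ => hfm⟩
    · exact ⟨0, 1, 0, Or.inl rfl, fun h' => absurd h' h⟩
  choose k ε b hε hf using hpiece'
  -- monotonicity of p
  have pmono : ∀ j ≤ n, ∀ i ≤ j, p i ≤ p j := by
    intro j hj
    induction j with
    | zero => intro i hi; interval_cases i; exact le_rfl
    | succ j ih =>
      intro i hi
      rcases eq_or_lt_of_le hi with h | h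
      · rw [h]
      · exact le_trans (ih (by omega) i (by omega)) (le_of_lt (hplt j (by omega)))
  have pmem : ∀ i ≤ n, p i ∈ Icc (0:ℝ) 1 := by
    intro i hi
    constructor
    · rw [← hp0]; exact pmono i hi 0 (Nat.zero_le i)
    · rw [← hpn]; exact pmono n le_rfl i hi
  -- cover
  have hcover : ∀ x ∈ Icc (0:ℝ) 1, ∃ i < n, x ∈ Icc (p i) (p (i+1)) := by
    intro x hx
    classical
    set s := (Finset.range n).filter (fun i => p i ≤ x) with hs
    have h0s : 0 ∈ s := by
      simp only [hs, Finset.mem_filter, Finset.mem_range]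
      exact ⟨hn, by rw [hp0]; exact hx.1⟩
    set i := s.max' ⟨0, h0s⟩ with hidef
    have his : i ∈ s := s.max'_mem _
    rw [hs, Finset.mem_filter, Finset.mem_range] at his
    refine ⟨i, his.1, his.2, ?_⟩
    by_contra hlt
    push_neg at hlt
    rcases (by omega : i + 1 < n ∨ i + 1 = n) with h | h
    · have : i + 1 ∈ s := by
        rw [hs, Finset.mem_filter, Finset.mem_range]
        exact ⟨h, le_of_lt hlt⟩
      have := Finset.le_max' s (i+1) this
      omega
    · rw [h, hpn] at hlt
      exact absurd hx.2 (not_le.mpr hlt)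
  -- slopes are at least 1
  have hk : ∀ i < n, 0 ≤ k i := by
    intro i hi
    have had : p i < p (i+1) := hplt i hi
    have haI : p i ∈ Icc (0:ℝ) 1 := pmem i (le_of_lt hi)
    have hdI : p (i+1) ∈ Icc (0:ℝ) 1 := pmem (i+1) hi
    have hga := hmaps haI
    have hgd := hmaps hdI
    have hA1 : uIcc (g (p i)) (g (p (i+1))) ⊆ Icc (0:ℝ) 1 := uIcc_subset_Icc hga hgd
    have hsub : Icc (p i) (p (i+1)) ⊆ g ⁻¹' (uIcc (g (p i)) (g (p (i+1)))) ∩ Icc 0 1 := by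
      intro x hx
      have hxf := hf i hi x hx
      have e1 := hf i hi (p i) ⟨le_rfl, le_of_lt had⟩
      have e2 := hf i hi (p (i+1)) ⟨le_of_lt had, le_rfl⟩
      have h2k : (0:ℝ) < 2 ^ (k i) := by positivity
      constructor
      · rcases hε i with h1 | h1
        · rw [h1] at hxf e1 e2
          exact Icc_subset_uIcc ⟨by rw [hxf, e1]; nlinarith [hx.1], by rw [hxf, e2]; nlinarith [hx.2]⟩
        · rw [h1] at hxf e1 e2
          exact Icc_subset_uIcc' ⟨by rw [hxf, e2]; nlinarith [hx.2], by rw [hxf, e1]; nlinarith [hx.1]⟩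
      · exact ⟨le_trans haI.1 hx.1, le_trans hx.2 hdI.2⟩
    have hvol := hmeas _ hA1 measurableSet_uIcc
    have h1 : volume (Icc (p i) (p (i+1))) ≤ volume (g ⁻¹' (uIcc (g (p i)) (g (p (i+1)))) ∩ Icc 0 1) :=
      measure_mono hsub
    rw [hvol, Real.volume_interval, Real.volume_Icc] at h1
    have e1 := hf i hi (p i) ⟨le_rfl, le_of_lt had⟩
    have e2 := hf i hi (p (i+1)) ⟨le_of_lt had, le_rfl⟩
    have h2k : (0:ℝ) < 2 ^ (k i) := by positivity
    have habs : |g (p (i+1)) - g (p i)| = 2 ^ (k i) * (p (i+1) - p i) := by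
      rcases hε i with h1 | h1 <;> rw [h1] at e1 e2 <;> rw [e1, e2] <;>
        [skip; rw [abs_sub_comm]] <;> rw [abs_of_nonneg (by nlinarith)] <;> ring
    rw [habs] at h1
    have h2 : p (i+1) - p i ≤ 2 ^ (k i) * (p (i+1) - p i) :=
      (ENNReal.ofReal_le_ofReal_iff (by nlinarith)).mp h1
    by_contra hneg
    push_neg at hneg
    have : (2:ℝ) ^ (k i) < 1 := zpow_lt_one_of_neg₀ (by norm_num) hneg
    nlinarith
  -- some b is dyadic
  obtain ⟨x0, hx0I, hgx0⟩ := hsurj (show (0:ℝ) ∈ Icc (0:ℝ) 1 by constructor <;> norm_num)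
  obtain ⟨i0, hi0, hx0m⟩ := hcover x0 hx0I
  have hb0 : IsDyadic (b i0) := by
    have had : p i0 < p (i0+1) := hplt i0 hi0
    have e0 := hf i0 hi0 x0 hx0m
    have h2k : (0:ℝ) < 2 ^ (k i0) := by positivity
    rcases hε i0 with h1 | h1
    · have e1 := hf i0 hi0 (p i0) ⟨le_rfl, le_of_lt had⟩
      have hge : 0 ≤ g (p i0) := (hmaps (pmem i0 (le_of_lt hi0))).1
      rw [h1] at e0 e1
      have : g (p i0) = 0 := by
        have : g (p i0) ≤ g x0 := by rw [e0, e1]; nlinarith [hx0m.1]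
        rw [hgx0] at this
        linarith
      have hbv : b i0 = 2 ^ (k i0) * (-(p i0)) := by rw [this] at e1; linarith [e1]
      rw [hbv]
      exact IsDyadic.mul_zpow _ ((hpd i0 (le_of_lt hi0)).neg)
    · have e1 := hf i0 hi0 (p (i0+1)) ⟨le_of_lt had, le_rfl⟩
      have hge : 0 ≤ g (p (i0+1)) := (hmaps (pmem (i0+1) hi0)).1
      rw [h1] at e0 e1
      have : g (p (i0+1)) = 0 := by
        have : g (p (i0+1)) ≤ g x0 := by rw [e0, e1]; nlinarith [hx0m.2]
        rw [hgx0] at this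
        linarith
      have hbv : b i0 = 2 ^ (k i0) * (p (i0+1)) := by rw [this] at e1; linarith [e1]
      rw [hbv]
      exact IsDyadic.mul_zpow _ (hpd (i0+1) hi0)
  -- all b are dyadic
  have hdiff : ∀ j, j + 1 < n → IsDyadic (b (j+1) - b j) := by
    intro j hj
    have hjn : j < n := by omega
    have e1 := hf j hjn (p (j+1)) ⟨le_of_lt (hplt j hjn), le_rfl⟩
    have e2 := hf (j+1) hj (p (j+1)) ⟨le_rfl, le_of_lt (hplt (j+1) hj)⟩
    have key : b (j+1) - b j = ε j * (2 ^ (k j) * p (j+1)) + (-(ε (j+1) * (2 ^ (k (j+1)) * p (j+1)))) := by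
      have := e1.symm.trans e2
      nlinarith [this]
    rw [key]
    have hpj : IsDyadic (p (j+1)) := hpd (j+1) (by omega)
    have d1 : IsDyadic (ε j * (2 ^ (k j) * p (j+1))) := by
      rcases hε j with h | h <;> rw [h]
      · rw [one_mul]; exact IsDyadic.mul_zpow _ hpj
      · have : (-1 : ℝ) * (2 ^ (k j) * p (j+1)) = -(2 ^ (k j) * p (j+1)) := by ring
        rw [this]; exact (IsDyadic.mul_zpow _ hpj).neg
    have d2 : IsDyadic (ε (j+1) * (2 ^ (k (j+1)) * p (j+1))) := by
      rcases hε (j+1) with h | h <;> rw [h]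
      · rw [one_mul]; exact IsDyadic.mul_zpow _ hpj
      · have : (-1 : ℝ) * (2 ^ (k (j+1)) * p (j+1)) = -(2 ^ (k (j+1)) * p (j+1)) := by ring
        rw [this]; exact (IsDyadic.mul_zpow _ hpj).neg
    exact d1.add_s4 d2.neg
  have hiff : ∀ j < n, (IsDyadic (b j) ↔ IsDyadic (b 0)) := by
    intro j
    induction j with
    | zero => intro _; rfl
    | succ j ih =>
      intro hj
      rw [← ih (by omega)]
      constructor
      · intro h
        have e : b j = b (j+1) + (-(b (j+1) - b j)) := by ring
        rw [e]; exact h.add_s4 (hdiff j hj).neg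
      · intro h
        have e : b (j+1) = b j + (b (j+1) - b j) := by ring
        rw [e]; exact h.add_s4 (hdiff j hj)
  have hbd : ∀ j < n, IsDyadic (b j) := fun j hj => (hiff j hj).mpr ((hiff i0 hi0).mp hb0)
  -- uniform denominator
  have hrep : ∀ j, ∃ (z : ℤ) (m : ℕ), j < n → b j = (z:ℝ)/2^m := by
    intro j
    by_cases h : j < n
    · obtain ⟨z, m, e⟩ := hbd j h
      exact ⟨z, m, fun _ => e⟩
    · exact ⟨0, 0, fun h' => absurd h' h⟩
  choose zb mb hbrep using hrep
  obtain ⟨zc, Nc, hcrep⟩ := hcd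
  set N := Nc ⊔ (Finset.range n).sup mb with hN
  have hNc : Nc ≤ N := le_sup_left
  have hNb : ∀ j < n, mb j ≤ N := fun j hj =>
    le_trans (Finset.le_sup (Finset.mem_range.mpr hj)) le_sup_right
  set S : Set ℝ := {x | x ∈ Icc (0:ℝ) 1 ∧ ∃ z : ℤ, x = (z:ℝ) / 2 ^ N} with hS
  have hSfin : S.Finite := by
    apply Set.Finite.subset (Set.Finite.image (fun z : ℤ => (z:ℝ)/2^N) (Set.finite_Icc (0:ℤ) (2^N)))
    rintro x ⟨⟨hx0, hx1⟩, z, rfl⟩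
    refine ⟨z, ⟨?_, ?_⟩, rfl⟩
    · have h2 : (0:ℝ) < 2^N := by positivity
      have h' : (z:ℝ) = ((z:ℝ)/2^N) * 2^N := by field_simp
      have : (0:ℝ) ≤ (z:ℝ) := by rw [h']; exact mul_nonneg hx0 h2.le
      exact_mod_cast this
    · have h2 : (0:ℝ) < 2^N := by positivity
      have h' : (z:ℝ) = ((z:ℝ)/2^N) * 2^N := by field_simp
      have : (z:ℝ) ≤ (2:ℝ)^N := by
        rw [h']
        calc ((z:ℝ)/2^N) * 2^N ≤ 1 * 2^N := mul_le_mul_of_nonneg_right hx1 h2.le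
        _ = 2^N := one_mul _
      exact_mod_cast (by push_cast; exact this : (z:ℝ) ≤ ((2^N : ℤ):ℝ))
  have hstep : ∀ x ∈ S, g x ∈ S := by
    rintro x ⟨hxI, z, hz⟩
    obtain ⟨i, hi, hxm⟩ := hcover x hxI
    refine ⟨hmaps hxI, ?_⟩
    have e := hf i hi x hxm
    have hki : (2:ℝ) ^ (k i) = 2 ^ ((k i).toNat) := by
      rw [← zpow_natCast (2:ℝ) (k i).toNat, Int.toNat_of_nonneg (hk i hi)]
    have hbv : b i = ((zb i * 2^(N - mb i) : ℤ):ℝ)/2^N := by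
      rw [hbrep i hi, rescale (zb i) (hNb i hi)]
    rcases hε i with h1 | h1
    · refine ⟨2^((k i).toNat) * z + zb i * 2^(N - mb i), ?_⟩
      rw [e, h1, hki, hbv, hz]
      push_cast
      ring
    · refine ⟨-(2^((k i).toNat) * z) + zb i * 2^(N - mb i), ?_⟩
      rw [e, h1, hki, hbv, hz]
      push_cast
      ring
  have horb : ∀ m : ℕ, g^[m] c ∈ S := by
    intro m
    induction m with
    | zero => exact ⟨hc, zc * 2^(N - Nc), by rw [Function.iterate_zero_apply, hcrep, rescale zc hNc]⟩
    | succ m ih => rw [Function.iterate_succ_apply']; exact hstep _ ih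
  have hrange : (Set.range fun m : ℕ => g^[m] c) ⊆ S := by
    rintro _ ⟨m, rfl⟩; exact horb m
  refine ⟨hSfin.subset hrange, ?_⟩
  have hninj : ¬ Function.Injective (fun m : ℕ => g^[m] c) := by
    intro hinj
    exact (Set.infinite_range_of_injective hinj) (hSfin.subset hrange)
  rcases Function.not_injective_iff.mp hninj with ⟨a, b', hab, hne⟩
  rcases hne.lt_or_gt with h | h
  · exact ⟨b', a, h, hab.symm⟩
  · exact ⟨a, b', h, hab⟩
end

section
/- Let h : [0,1] → [0,1] be continuous. Suppose there exist intervals I₀, I₁, I₂ ⊆ [0,1] with I₁ ⊂ I₀, I₂ ⊂ I₀, the interiors of I₁ and I₂ disjoint, and h(I₁) = h(I₂) = I₀. Then there exists a point x₀ ∈ I₀ with h³(x₀) = x₀ and h(x₀) ≠ x₀ and h²(x₀) ≠ x₀, i.e., a periodic point of period exactly 3. -/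
/-!
Let `J = [c, d]` and `K = [e, f]`, ordered so that `d ≤ e`. Since `h(J) ⊇ K`, `h(K) ⊇ J` and
`h(K) ⊇ K`, pulling back along `J → K → K → J` gives closed intervals `L₀ ⊆ J`,
`h(L₀) = L₁ ⊆ K`, `h(L₁) = L₂ ⊆ K` with `h(L₂) = J ⊇ L₀`, so `h³` has a fixed point `x ∈ L₀`
by the intermediate value theorem. If `h x = x`, then `x ∈ J ∩ K ⊆ {d}`, so `d = e` and
`h d = d`; as `h d` lies strictly between the values `c` and `f` attained on `J`, some
subinterval of `J` disjoint from `K` still covers `J ∪ K`, and repeating the argument with it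
gives a point `x` with `h x ∈ K`, hence `h x ≠ x`. Finally, a point with `h³ x = x` and
`h x ≠ x` also has `h² x ≠ x`.
-/

open Set Function OrderDual

theorem le_or_le_of_Ioo_inter_Ioo_eq_empty {β : Type*} [LinearOrder β] [DenselyOrdered β]
    {a b c d : β} (hab : a < b) (hcd : c < d)
    (h : Ioo a b ∩ Ioo c d = ∅) : b ≤ c ∨ d ≤ a := by
  have := Ioo_disjoint_Ioo.1 (disjoint_iff_inter_eq_empty.2 h)
  rw [min_le_iff, le_max_iff, le_max_iff] at this
  rcases this with (hba | hbc) | (hda | hdc)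
  · exact absurd hba hab.not_ge
  · exact .inl hbc
  · exact .inr hda
  · exact absurd hdc hcd.not_ge

theorem Function.iterate_two_ne_of_iterate_three_eq {β : Type*} {g : β → β} {x : β}
    (h3 : g^[3] x = x) (h1 : g x ≠ x) : g^[2] x ≠ x := fun h2 =>
  h1 <| calc g x = g (g^[2] x) := by rw [h2]
    _ = x := h3

section

variable {α δ : Type*} [ConditionallyCompleteLinearOrder α] [TopologicalSpace α] [OrderTopology α]
  [DenselyOrdered α] [LinearOrder δ] [TopologicalSpace δ] [OrderClosedTopology δ]

/-- `p` is the last time `f` equals `r` on `[u, v]`, and `q` the first time after `p` that it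
equals `s`; between them `f` can leave `[r, s]` only by crossing `r` or `s` once more. -/
theorem exists_Icc_subset_image_eq_Icc_of_le {f : α → δ} {u v : α} {r s : δ} (huv : u ≤ v)
    (hrs : r ≤ s) (hf : ContinuousOn f (Icc u v)) (hu : f u = r) (hv : f v = s) :
    ∃ p q, p ≤ q ∧ Icc p q ⊆ Icc u v ∧ f '' Icc p q = Icc r s := by
  have hcpt : ∀ {a b : α} (t : δ), Icc a b ⊆ Icc u v → IsCompact (Icc a b ∩ f ⁻¹' {t}) :=
    fun t hab => isCompact_Icc.of_isClosed_subset
      ((hf.mono hab).preimage_isClosed_of_isClosed isClosed_Icc isClosed_singleton)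
      inter_subset_left
  obtain ⟨p, ⟨hp, hfp : f p = r⟩, hp_max⟩ := (hcpt r subset_rfl).exists_isGreatest
    ⟨u, left_mem_Icc.2 huv, hu⟩
  obtain ⟨q, ⟨hq, hfq : f q = s⟩, hq_min⟩ := (hcpt s (Icc_subset_Icc_left hp.1)).exists_isLeast
    ⟨v, ⟨hp.2, le_rfl⟩, hv⟩
  have hpq : Icc p q ⊆ Icc u v := Icc_subset_Icc hp.1 hq.2
  refine ⟨p, q, hq.1, hpq, Subset.antisymm ?_ ?_⟩
  · rintro _ ⟨x, hx, rfl⟩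
    refine ⟨le_of_not_gt fun hlt => ?_, le_of_not_gt fun hlt => ?_⟩
    · obtain ⟨y, hy, hfy⟩ := intermediate_value_Icc hx.2
        (hf.mono (Icc_subset_Icc (hpq hx).1 hq.2)) ⟨hlt.le, hfq ▸ hrs⟩
      have hyp : y ≤ p := hp_max ⟨⟨(hpq hx).1.trans hy.1, hy.2.trans hq.2⟩, hfy⟩
      have : x = y := le_antisymm hy.1 (hyp.trans hx.1)
      exact hlt.ne (this ▸ hfy)
    · obtain ⟨y, hy, hfy⟩ := intermediate_value_Icc hx.1
        (hf.mono (Icc_subset_Icc hp.1 (hpq hx).2)) ⟨hfp ▸ hrs, hlt.le⟩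
      have hqy : q ≤ y := hq_min ⟨⟨hy.1, hy.2.trans (hpq hx).2⟩, hfy⟩
      have : x = y := le_antisymm (hx.2.trans hqy) hy.2
      exact hlt.ne' (this ▸ hfy)
  · simpa only [hfp, hfq] using intermediate_value_Icc hq.1 (hf.mono hpq)

theorem exists_Icc_subset_image_eq_Icc {f : α → δ} {a b : α} {r s : δ} (hrs : r ≤ s)
    (hf : ContinuousOn f (Icc a b)) (hsurj : SurjOn f (Icc a b) (Icc r s)) :
    ∃ p q, p ≤ q ∧ Icc p q ⊆ Icc a b ∧ f '' Icc p q = Icc r s := by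
  obtain ⟨u, hu, hfu⟩ := hsurj (left_mem_Icc.2 hrs)
  obtain ⟨v, hv, hfv⟩ := hsurj (right_mem_Icc.2 hrs)
  rcases le_total u v with huv | hvu
  · obtain ⟨p, q, hpq, hsub, him⟩ := exists_Icc_subset_image_eq_Icc_of_le huv hrs
      (hf.mono (Icc_subset_Icc hu.1 hv.2)) hfu hfv
    exact ⟨p, q, hpq, hsub.trans (Icc_subset_Icc hu.1 hv.2), him⟩
  · obtain ⟨p, q, hpq, hsub, him⟩ := exists_Icc_subset_image_eq_Icc_of_le (f := toDual ∘ f) hvu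
      (toDual_le_toDual.2 hrs) (hf.mono (Icc_subset_Icc hv.1 hu.2))
      (congrArg toDual hfv) (congrArg toDual hfu)
    refine ⟨p, q, hpq, hsub.trans (Icc_subset_Icc hv.1 hu.2), ?_⟩
    rw [image_comp, Icc_toDual, toDual.image_eq_preimage_symm] at him
    exact preimage_injective.2 ofDual.surjective him

variable {h : α → α} {c d e f : α}

theorem exists_iterate_three_eq_of_surjOn (hcd : c ≤ d) (hJ : ContinuousOn h (Icc c d))
    (hK : ContinuousOn h (Icc e f)) (hJK : SurjOn h (Icc c d) (Icc e f))
    (hKJ : SurjOn h (Icc e f) (Icc c d)) (hKK : SurjOn h (Icc e f) (Icc e f)) :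
    ∃ x ∈ Icc c d, h x ∈ Icc e f ∧ h^[2] x ∈ Icc e f ∧ h^[3] x = x := by
  obtain ⟨p₂, q₂, hpq₂, hL₂, him₂⟩ := exists_Icc_subset_image_eq_Icc hcd hK hKJ
  obtain ⟨p₁, q₁, hpq₁, hL₁, him₁⟩ :=
    exists_Icc_subset_image_eq_Icc hpq₂ hK (hKK.mono subset_rfl hL₂)
  obtain ⟨p₀, q₀, hpq₀, hL₀, him₀⟩ :=
    exists_Icc_subset_image_eq_Icc hpq₁ hJ (hJK.mono subset_rfl hL₁)
  have hmaps₀ : MapsTo h (Icc p₀ q₀) (Icc p₁ q₁) := him₀ ▸ mapsTo_image h _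
  have hmaps₁ : MapsTo h (Icc p₁ q₁) (Icc p₂ q₂) := him₁ ▸ mapsTo_image h _
  have hcont : ContinuousOn h^[3] (Icc p₀ q₀) :=
    (hK.mono hL₂).comp ((hK.mono hL₁).comp (hJ.mono hL₀) hmaps₀) (hmaps₁.comp hmaps₀)
  have hsurj : SurjOn h^[3] (Icc p₀ q₀) (Icc p₀ q₀) := by
    change Icc p₀ q₀ ⊆ (h ∘ h ∘ h) '' Icc p₀ q₀
    rwa [image_comp, image_comp, him₀, him₁, him₂]
  obtain ⟨x, hx, hfix⟩ := exists_mem_Icc_isFixedPt_of_surjOn hcont hpq₀ hsurj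
  exact ⟨x, hL₀ hx, hL₁ (hmaps₀ hx), hL₂ (hmaps₁ (hmaps₀ hx)), hfix⟩

theorem exists_period_three_of_surjOn_union_of_le (hcd : c < d) (hef : e < f) (hde : d ≤ e)
    (hJ : ContinuousOn h (Icc c d)) (hK : ContinuousOn h (Icc e f))
    (hJcov : SurjOn h (Icc c d) (Icc c d ∪ Icc e f))
    (hKcov : SurjOn h (Icc e f) (Icc c d ∪ Icc e f)) :
    ∃ x ∈ Icc c d, h^[3] x = x ∧ h x ≠ x ∧ h^[2] x ≠ x := by
  have hKJ : SurjOn h (Icc e f) (Icc c d) := hKcov.mono subset_rfl subset_union_left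
  have hKK : SurjOn h (Icc e f) (Icc e f) := hKcov.mono subset_rfl subset_union_right
  suffices ∃ x ∈ Icc c d, h^[3] x = x ∧ h x ≠ x from
    let ⟨x, hx, h3, h1⟩ := this
    ⟨x, hx, h3, h1, iterate_two_ne_of_iterate_three_eq h3 h1⟩
  obtain ⟨x, hx, hx₁, -, hx₃⟩ := exists_iterate_three_eq_of_surjOn hcd.le hJ hK
    (hJcov.mono subset_rfl subset_union_right) hKJ hKK
  obtain hfix | hfix := ne_or_eq (h x) x
  · exact ⟨x, hx, hx₃, hfix⟩
  -- `x = d = e` is a common fixed endpoint; shrink `[c, d]` to a subinterval mapped onto `[c, f]`,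
  -- which stays away from `d` because `h d = d ∉ {c, f}`
  obtain rfl : d = x := le_antisymm (hde.trans (hfix ▸ hx₁).1) hx.2
  obtain ⟨u, hu, hfu⟩ := hJcov (Or.inl (left_mem_Icc.2 hcd.le))
  obtain ⟨v, hv, hfv⟩ := hJcov (Or.inr (right_mem_Icc.2 hef.le))
  have hud : u < d := hu.2.lt_of_ne (by rintro rfl; exact hcd.ne' (hfix.symm.trans hfu))
  have hvd : v < d :=
    hv.2.lt_of_ne (by rintro rfl; exact (hde.trans_lt hef).ne (hfix.symm.trans hfv))
  have hJ' : uIcc u v ⊆ Icc c d := uIcc_subset_Icc hu hv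
  have hJ'cov : SurjOn h (uIcc u v) (Icc c f) := by
    show Icc c f ⊆ _
    simpa only [hfu, hfv, uIcc_of_le (hcd.le.trans (hde.trans hef.le))]
      using intermediate_value_uIcc (hJ.mono hJ')
  obtain ⟨y, hy, hy₁, -, hy₃⟩ := exists_iterate_three_eq_of_surjOn inf_le_sup (hJ.mono hJ') hK
    (hJ'cov.mono subset_rfl (Icc_subset_Icc_left (hcd.le.trans hde))) (hKJ.mono subset_rfl hJ') hKK
  refine ⟨y, hJ' hy, hy₃, fun hy_fix => ?_⟩
  have : y < e := (hy.2.trans_lt (max_lt hud hvd)).trans_le hde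
  exact this.not_ge (hy_fix ▸ hy₁).1

end

theorem stmt_6_general (h : ℝ → ℝ)
    (hcont : ContinuousOn h (Icc 0 1))
    (a b c d e f : ℝ)
    (hI₀ : Icc a b ⊆ Icc (0:ℝ) 1)
    (hcd : c < d) (hef : e < f)
    (hsub₁ : Icc c d ⊆ Icc a b) (hsub₂ : Icc e f ⊆ Icc a b)
    (hdisj : Ioo c d ∩ Ioo e f = ∅)
    (him₁ : h '' Icc c d = Icc a b) (him₂ : h '' Icc e f = Icc a b) :
    ∃ x₀ ∈ Icc a b, h^[3] x₀ = x₀ ∧ h x₀ ≠ x₀ ∧ h^[2] x₀ ≠ x₀ := by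
  have hJ : ContinuousOn h (Icc c d) := hcont.mono (hsub₁.trans hI₀)
  have hK : ContinuousOn h (Icc e f) := hcont.mono (hsub₂.trans hI₀)
  have hcov : Icc c d ∪ Icc e f ⊆ Icc a b := union_subset hsub₁ hsub₂
  rcases le_or_le_of_Ioo_inter_Ioo_eq_empty hcd hef hdisj with hde | hfc
  · obtain ⟨x, hx, hper⟩ :=
      exists_period_three_of_surjOn_union_of_le hcd hef hde hJ hK
        (hcov.trans him₁.ge) (hcov.trans him₂.ge)
    exact ⟨x, hsub₁ hx, hper⟩
  · rw [union_comm] at hcov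
    obtain ⟨x, hx, hper⟩ :=
      exists_period_three_of_surjOn_union_of_le hef hcd hfc hK hJ
        (hcov.trans him₂.ge) (hcov.trans him₁.ge)
    exact ⟨x, hsub₂ hx, hper⟩

theorem stmt_6 (h : ℝ → ℝ)
    (hcont : ContinuousOn h (Icc 0 1))
    (hmaps : MapsTo h (Icc (0:ℝ) 1) (Icc (0:ℝ) 1))
    (a b c d e f : ℝ)
    (hI₀ : Icc a b ⊆ Icc (0:ℝ) 1)
    (hab : a < b) (hcd : c < d) (hef : e < f)
    (hsub₁ : Icc c d ⊆ Icc a b) (hsub₂ : Icc e f ⊆ Icc a b)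
    (hdisj : Ioo c d ∩ Ioo e f = ∅)
    (him₁ : h '' Icc c d = Icc a b) (him₂ : h '' Icc e f = Icc a b) :
    ∃ x₀ ∈ Icc a b, h^[3] x₀ = x₀ ∧ h x₀ ≠ x₀ ∧ h^[2] x₀ ≠ x₀ :=
  stmt_6_general h hcont a b c d e f hI₀ hcd hef hsub₁ hsub₂ hdisj him₁ him₂
end

section
/- Let k₁ ≤ k₂ ≤ ⋯ ≤ kₘ be the sequence kᵢ = i for i < m and kₘ = m−1, and let l₁ ≤ l₂ ≤ ⋯ ≤ lₘ be any positive integers with ∑_{i=1}^{m} 2^{-lᵢ} = 1. Then ∑_{j=1}^{i} (2^{-kⱼ} − 2^{-lⱼ}) ≥ 0 for every i = 1, …, m; i.e., the sequence (2^{-kⱼ}) majorizes (2^{-lⱼ}). -/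
/-- Geometric sum of negative powers of 2. -/
lemma geom_half (n : ℕ) : ∑ j ∈ Finset.range n, (2:ℝ)^(-(j+1:ℤ)) = 1 - 2^(-(n:ℤ)) := by
  induction n with
  | zero => simp
  | succ n ih =>
    rw [Finset.sum_range_succ, ih]
    have h : (2:ℝ)^(-(n:ℤ)) = 2 * 2^(-(n+1:ℤ)) := by
      rw [show -(n:ℤ) = 1 + (-(n+1:ℤ)) by ring, zpow_add₀ (by norm_num : (2:ℝ) ≠ 0)]
      norm_num
    push_cast
    rw [h]
    ring

/-- The special sequence: `kᵢ = i` for `i = 1, …, m-1` and `kₘ = m-1`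
(here indexed by `Fin m`, zero-based). -/
def kopt (m : ℕ) (i : Fin m) : ℕ := if (i : ℕ) + 1 < m then (i : ℕ) + 1 else m - 1

theorem stmt_11 (m : ℕ) (hm : 1 ≤ m) (l : Fin m → ℕ)
    (hlpos : ∀ i, 1 ≤ l i) (hlmono : Monotone l)
    (hlsum : ∑ i : Fin m, (2:ℝ) ^ (-(l i : ℤ)) = 1) :
    ∀ i : Fin m, ∑ j ∈ Finset.Iic i, (2:ℝ) ^ (-(l j : ℤ)) ≤
      ∑ j ∈ Finset.Iic i, (2:ℝ) ^ (-(kopt m j : ℤ)) := by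
  set S : Fin m → ℝ := fun i => ∑ j ∈ Finset.Iic i, (2:ℝ) ^ (-(l j : ℤ)) with hS
  -- positivity
  have hpos : ∀ j : Fin m, (0:ℝ) < (2:ℝ) ^ (-(l j : ℤ)) := fun j => zpow_pos (by norm_num) _
  -- strict bound when not the full sum
  have hSlt : ∀ i : Fin m, (i : ℕ) + 1 < m → S i < 1 := by
    intro i hi
    rw [← hlsum]
    apply Finset.sum_lt_sum_of_subset (Finset.subset_univ _)
      (Finset.mem_univ (⟨(i:ℕ)+1, hi⟩ : Fin m)) ?_ (hpos _) ?_
    · simp only [Finset.mem_Iic, Fin.le_def]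
      omega
    · intro j _ _
      exact (hpos j).le
  -- integrality: if S i < 1 then S i ≤ 1 - 2^{-l i}
  have hint : ∀ i : Fin m, S i < 1 → S i ≤ 1 - (2:ℝ) ^ (-(l i : ℤ)) := by
    intro i hSi
    set L := l i with hL
    set N : ℕ := ∑ j ∈ Finset.Iic i, 2 ^ (L - l j) with hNdef
    have hNval : (N : ℝ) = (2:ℝ) ^ (L : ℤ) * S i := by
      rw [hNdef, hS]
      push_cast
      rw [Finset.mul_sum]
      apply Finset.sum_congr rfl
      intro j hj
      have hle : l j ≤ L := hlmono (Finset.mem_Iic.mp hj)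
      rw [← zpow_natCast (2:ℝ) (L - l j), Nat.cast_sub hle, ← zpow_add₀ (by norm_num : (2:ℝ) ≠ 0)]
      ring_nf
    have h2L : (0:ℝ) < (2:ℝ) ^ (L : ℤ) := zpow_pos (by norm_num) _
    have hNlt : (N : ℝ) < (2:ℝ) ^ (L : ℤ) := by
      rw [hNval]
      nlinarith
    have hNlt' : N < 2 ^ L := by
      have : ((N : ℝ)) < ((2 ^ L : ℕ) : ℝ) := by push_cast; rwa [← zpow_natCast]
      exact_mod_cast this
    have hNle : (N : ℝ) ≤ (2:ℝ) ^ (L : ℤ) - 1 := by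
      have : (N : ℕ) + 1 ≤ 2 ^ L := hNlt'
      have : ((N : ℝ)) + 1 ≤ ((2 ^ L : ℕ) : ℝ) := by exact_mod_cast this
      rw [show (((2:ℕ) ^ L : ℕ) : ℝ) = (2:ℝ) ^ (L:ℤ) by push_cast; rw [← zpow_natCast]] at this
      linarith
    have hmulinv : (2:ℝ) ^ (L : ℤ) * (2:ℝ) ^ (-(L : ℤ)) = 1 := by
      rw [← zpow_add₀ (by norm_num : (2:ℝ) ≠ 0)]; simp
    nlinarith [hNval, hNle, h2L]
  -- key bound by induction
  have key : ∀ n : ℕ, ∀ hn : n + 1 < m, S ⟨n, by omega⟩ ≤ 1 - (2:ℝ) ^ (-(n + 1 : ℤ)) := by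
    intro n
    induction n with
    | zero =>
      intro hn
      have h0 : S ⟨0, by omega⟩ = (2:ℝ) ^ (-(l ⟨0, by omega⟩ : ℤ)) := by
        have hset : Finset.Iic (⟨0, by omega⟩ : Fin m) = {⟨0, by omega⟩} := by
          ext x; simp [Fin.le_def, Fin.ext_iff]
        simp only [hS]
        rw [hset, Finset.sum_singleton]
      rw [h0]
      have h1 : (2:ℝ) ^ (-(l ⟨0, by omega⟩ : ℤ)) ≤ (2:ℝ) ^ (-1 : ℤ) := by
        apply zpow_le_zpow_right₀ (by norm_num)
        have := hlpos ⟨0, by omega⟩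
        omega
      calc (2:ℝ) ^ (-(l ⟨0, by omega⟩ : ℤ)) ≤ (2:ℝ) ^ (-1 : ℤ) := h1
        _ = 1 - (2:ℝ) ^ (-(0 + 1 : ℤ)) := by norm_num
    | succ n ih =>
      intro hn
      have hn' : n + 1 < m := by omega
      have ihn := ih hn'
      have hsplit : S ⟨n+1, by omega⟩ = S ⟨n, by omega⟩ + (2:ℝ) ^ (-(l ⟨n+1, by omega⟩ : ℤ)) := by
        have hset : Finset.Iic (⟨n+1, by omega⟩ : Fin m)
            = insert (⟨n+1, by omega⟩ : Fin m) (Finset.Iic (⟨n, by omega⟩ : Fin m)) := by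
          ext x
          simp only [Finset.mem_Iic, Finset.mem_insert, Fin.le_def, Fin.ext_iff]
          omega
        simp only [hS]
        rw [hset, Finset.sum_insert (by simp only [Finset.mem_Iic, Fin.le_def]; omega)]
        ring
      by_cases hcase : n + 2 ≤ l ⟨n+1, by omega⟩
      · -- small new term
        have hterm : (2:ℝ) ^ (-(l ⟨n+1, by omega⟩ : ℤ)) ≤ (2:ℝ) ^ (-(n + 2 : ℤ)) := by
          apply zpow_le_zpow_right₀ (by norm_num)
          omega
        have hdbl : (2:ℝ) ^ (-(n + 1 : ℤ)) = 2 * (2:ℝ) ^ (-(n + 2 : ℤ)) := by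
          rw [show (-(n + 1 : ℤ)) = 1 + (-(n + 2 : ℤ)) by ring,
            zpow_add₀ (by norm_num : (2:ℝ) ≠ 0)]
          norm_num
        rw [hsplit]
        rw [show (-(↑(n+1) + 1 : ℤ)) = -((n:ℤ) + 2) by push_cast; ring]
        push_cast at ihn hdbl hterm
        linarith
      · -- l (n+1) ≤ n+1 : use integrality
        have hlt1 : S ⟨n+1, by omega⟩ < 1 := hSlt _ (by simpa using hn)
        have hi := hint _ hlt1
        have hterm : (2:ℝ) ^ (-(n + 2 : ℤ)) ≤ (2:ℝ) ^ (-(l ⟨n+1, by omega⟩ : ℤ)) := by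
          apply zpow_le_zpow_right₀ (by norm_num)
          omega
        rw [show (-(↑(n+1) + 1 : ℤ)) = -((n:ℤ) + 2) by push_cast; ring]
        push_cast at hterm hi
        linarith
  -- now the main statement
  intro i
  by_cases hi : (i : ℕ) + 1 < m
  · -- RHS is exactly 1 - 2^{-(i+1)}
    have hR : ∑ j ∈ Finset.Iic i, (2:ℝ) ^ (-(kopt m j : ℤ))
        = 1 - (2:ℝ) ^ (-((i:ℕ) + 1 : ℤ)) := by
      have h1 : ∀ j ∈ Finset.Iic i, (2:ℝ) ^ (-(kopt m j : ℤ)) = (2:ℝ) ^ (-((j:ℕ) + 1 : ℤ)) := by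
        intro j hj
        have hjm : (j : ℕ) + 1 < m := by
          have := Finset.mem_Iic.mp hj
          have : (j : ℕ) ≤ (i : ℕ) := this
          omega
        rw [kopt, if_pos hjm]
        push_cast
        ring_nf
      rw [Finset.sum_congr rfl h1]
      have h2 : ∑ j ∈ Finset.Iic i, (2:ℝ) ^ (-((j:ℕ) + 1 : ℤ))
          = ∑ j ∈ Finset.range ((i:ℕ) + 1), (2:ℝ) ^ (-(j + 1 : ℤ)) := by
        rw [show Finset.range ((i:ℕ) + 1) = Finset.Iic (i:ℕ) by
              ext x; simp [Nat.lt_succ_iff],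
            ← Fin.map_valEmbedding_Iic, Finset.sum_map]
        rfl
      rw [h2, geom_half]
      push_cast
      ring_nf
    rw [hR]
    have := key (i : ℕ) hi
    have hSi : S ⟨(i:ℕ), i.isLt⟩ = S i := by congr
    rw [hSi] at this
    push_cast at this ⊢
    convert this using 2
  · -- i is the last index; both sides are 1 (LHS = 1 ≤ RHS = 1)
    have hival : (i : ℕ) = m - 1 := by omega
    have hIic : Finset.Iic i = Finset.univ := by
      ext x
      simp only [Finset.mem_Iic, Finset.mem_univ, iff_true, Fin.le_def]
      omega
    rw [hIic]
    -- LHS over univ equals 1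
    have hL : ∑ j : Fin m, (2:ℝ) ^ (-(l j : ℤ)) = 1 := hlsum
    rw [hL]
    -- compute RHS
    obtain ⟨m', rfl⟩ : ∃ m', m = m' + 1 := ⟨m - 1, by omega⟩
    rw [Fin.sum_univ_castSucc]
    have hlast : kopt (m' + 1) (Fin.last m') = m' := by
      simp [kopt]
    have hcast : ∀ j : Fin m', (2:ℝ) ^ (-(kopt (m'+1) j.castSucc : ℤ))
        = (2:ℝ) ^ (-((j:ℕ) + 1 : ℤ)) := by
      intro j
      have : kopt (m'+1) j.castSucc = (j : ℕ) + 1 := by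
        unfold kopt
        rw [if_pos (by simpa using j.isLt)]
        simp
      rw [this]; push_cast; ring_nf
    rw [hlast, Finset.sum_congr rfl (fun j _ => hcast j)]
    have : ∑ j : Fin m', (2:ℝ) ^ (-((j:ℕ) + 1 : ℤ))
        = ∑ j ∈ Finset.range m', (2:ℝ) ^ (-(j + 1 : ℤ)) :=
      Fin.sum_univ_eq_sum_range (fun j => (2:ℝ) ^ (-(j + 1 : ℤ))) m'
    rw [this, geom_half]
    simp
end

section
/- Let g₁, g₂ : [0,1] → [0,1] be continuous surjective piecewise affine Lebesgue-measure-preserving maps with finitely many breakpoints. Denote by #(g) the number of type II breakpoints of g (interior points where the left and right derivatives have opposite signs). Then #(g₁ ∘ g₂) ≥ #(g₁) + #(g₂). -/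
/-!
A volume-preserving map has no flat piece (its fibre would have positive measure), so all
one-sided slopes of `g₁` and `g₂` are nonzero. Near a type II point `x` of `g₂`, both sides of `x`
are sent to the same side of `g₂ x`, where `g₁` is affine with nonzero slope; hence `x` is a type II
point of `g₁ ∘ g₂`. For a type II point `y` of `g₁`, take preimages of `0` and `1` under `g₂`; the
supremum of `{g₂ < y}` between them is a point `x` where `g₂` crosses the level `y` monotonically.
There `g₂` is not type II but `g₁ ∘ g₂` is, and distinct `y` give distinct `x`. Both families lie
in the finite set of type II points of `g₁ ∘ g₂`.
-/

open Set MeasureTheory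

/-- `x` is a type II breakpoint of `g`: an interior point around which `g` is
affine on both sides with one-sided slopes of opposite signs. -/
def IsTypeII (g : ℝ → ℝ) (x : ℝ) : Prop :=
  0 < x ∧ x < 1 ∧ ∃ δ > 0, ∃ s₁ b₁ s₂ b₂ : ℝ, s₁ * s₂ < 0 ∧
    (∀ z ∈ Icc (x - δ) x, g z = s₁ * z + b₁) ∧
    (∀ z ∈ Icc x (x + δ), g z = s₂ * z + b₂)

/-- `g` is piecewise affine on `[0,1]` with finitely many pieces. -/
def PWAffine (g : ℝ → ℝ) : Prop :=
  ∃ (n : ℕ) (p : ℕ → ℝ), 0 < n ∧ p 0 = 0 ∧ p n = 1 ∧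
    (∀ i < n, p i < p (i + 1)) ∧
    ∀ i < n, ∃ s b : ℝ, ∀ x ∈ Icc (p i) (p (i + 1)), g x = s * x + b

open Filter Topology

def HasAffineSlope (g : ℝ → ℝ) (s : ℝ) (l : Filter ℝ) (x : ℝ) : Prop :=
  ∀ᶠ z in l, g z = g x + s * (z - x)

section AffineSlope

variable {g g₁ g₂ : ℝ → ℝ} {s s₁ s₂ t : ℝ} {l l' : Filter ℝ} {x : ℝ}

lemma hasAffineSlope_of_eqOn {S : Set ℝ} {c : ℝ} (hS : S ∈ l) (hx : x ∈ S)
    (h : ∀ z ∈ S, g z = s * z + c) : HasAffineSlope g s l x := by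
  filter_upwards [hS] with z hz
  rw [h z hz, h x hx]
  ring

namespace HasAffineSlope

lemma mono (h : HasAffineSlope g s l x) (hl : l' ≤ l) : HasAffineSlope g s l' x :=
  h.filter_mono hl

lemma neg (h : HasAffineSlope g s l x) : HasAffineSlope (fun z => -g z) (-s) l x := by
  filter_upwards [h] with z hz
  rw [hz]
  ring

lemma comp (h₁ : HasAffineSlope g₁ t l' (g₂ x)) (h₂ : HasAffineSlope g₂ s l x)
    (hg₂ : Tendsto g₂ l l') : HasAffineSlope (g₁ ∘ g₂) (t * s) l x := by
  filter_upwards [h₂, hg₂.eventually h₁] with z hz₂ hz₁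
  simp only [Function.comp_apply]
  rw [hz₁, hz₂]
  ring

lemma unique (h : HasAffineSlope g s l x) (h' : HasAffineSlope g t l x)
    (hl : ∃ᶠ z in l, z ≠ x) : s = t := by
  obtain ⟨z, hzx, hz, hz'⟩ := (hl.and_eventually (h.and h')).exists
  refine mul_right_cancel₀ (sub_ne_zero.2 hzx) ?_
  linarith

lemma tendsto (h : HasAffineSlope g s l x) (hl : l ≤ 𝓝 x) : Tendsto g l (𝓝 (g x)) := by
  have hcont : Continuous fun z => g x + s * (z - x) := by fun_prop
  have hlim : Tendsto (fun z => g x + s * (z - x)) l (𝓝 (g x)) := by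
    simpa using (hcont.tendsto x).mono_left hl
  exact hlim.congr' (Eventually.mono h fun z hz => hz.symm)

lemma tendsto_nhdsWithin {S : Set ℝ} (h : HasAffineSlope g s l x) (hl : l ≤ 𝓝 x)
    (hS : ∀ᶠ z in l, g x + s * (z - x) ∈ S) : Tendsto g l (𝓝[S] (g x)) := by
  refine tendsto_nhdsWithin_iff.2 ⟨h.tendsto hl, ?_⟩
  filter_upwards [h, hS] with z hz hzS
  rwa [hz]

lemma tendsto_nhdsLE_nhdsLE (h : HasAffineSlope g s (𝓝[≤] x) x) (hs : 0 ≤ s) :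
    Tendsto g (𝓝[≤] x) (𝓝[≤] (g x)) :=
  h.tendsto_nhdsWithin nhdsWithin_le_nhds <| by
    filter_upwards [self_mem_nhdsWithin] with z (hz : z ≤ x)
    exact add_le_of_nonpos_right (mul_nonpos_of_nonneg_of_nonpos hs (by linarith))

lemma tendsto_nhdsLE_nhdsGE (h : HasAffineSlope g s (𝓝[≤] x) x) (hs : s ≤ 0) :
    Tendsto g (𝓝[≤] x) (𝓝[≥] (g x)) :=
  h.tendsto_nhdsWithin nhdsWithin_le_nhds <| by
    filter_upwards [self_mem_nhdsWithin] with z (hz : z ≤ x)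
    exact le_add_of_nonneg_right (mul_nonneg_of_nonpos_of_nonpos hs (by linarith))

lemma tendsto_nhdsGE_nhdsGE (h : HasAffineSlope g s (𝓝[≥] x) x) (hs : 0 ≤ s) :
    Tendsto g (𝓝[≥] x) (𝓝[≥] (g x)) :=
  h.tendsto_nhdsWithin nhdsWithin_le_nhds <| by
    filter_upwards [self_mem_nhdsWithin] with z (hz : x ≤ z)
    exact le_add_of_nonneg_right (mul_nonneg hs (by linarith))

lemma tendsto_nhdsGE_nhdsLE (h : HasAffineSlope g s (𝓝[≥] x) x) (hs : s ≤ 0) :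
    Tendsto g (𝓝[≥] x) (𝓝[≤] (g x)) :=
  h.tendsto_nhdsWithin nhdsWithin_le_nhds <| by
    filter_upwards [self_mem_nhdsWithin] with z (hz : x ≤ z)
    exact add_le_of_nonpos_right (mul_nonpos_of_nonpos_of_nonneg hs (by linarith))

lemma pos_of_frequently_lt (h : HasAffineSlope g s (𝓝[≤] x) x)
    (hf : ∃ᶠ z in 𝓝[≤] x, g z < g x) : 0 < s := by
  obtain ⟨z, hlt, hz, hzx⟩ := (hf.and_eventually (h.and self_mem_nhdsWithin)).exists
  by_contra! hs
  have : 0 ≤ s * (z - x) := mul_nonneg_of_nonpos_of_nonpos hs (by linarith [show z ≤ x from hzx])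
  linarith

lemma pos_of_eventually_le (h : HasAffineSlope g s (𝓝[≥] x) x) (hs : s ≠ 0)
    (hf : ∀ᶠ z in 𝓝[≥] x, g x ≤ g z) : 0 < s := by
  refine hs.lt_or_gt.resolve_left fun hneg => ?_
  have hev : ∀ᶠ z in 𝓝[>] x, (g x ≤ g z ∧ g z = g x + s * (z - x)) ∧ x < z :=
    ((hf.and h).filter_mono (nhdsWithin_mono _ Ioi_subset_Ici_self)).and self_mem_nhdsWithin
  obtain ⟨z, ⟨hle, hz⟩, hxz⟩ := hev.exists
  nlinarith

lemma exists_gt_of_nhdsGE (h : HasAffineSlope g s (𝓝[≥] x) x) (hs : 0 < s) {b : ℝ}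
    (hb : x < b) : ∃ z ∈ Ioc x b, g x < g z := by
  obtain ⟨z, hz, hzb⟩ :=
    ((h.filter_mono (nhdsWithin_mono _ Ioi_subset_Ici_self)).and (Ioc_mem_nhdsGT hb)).exists
  exact ⟨z, hzb, by rw [hz]; nlinarith [hzb.1]⟩

lemma exists_lt_of_nhdsLE (h : HasAffineSlope g s (𝓝[≤] x) x) (hs : 0 < s) {a : ℝ}
    (ha : a < x) : ∃ z ∈ Ico a x, g z < g x := by
  obtain ⟨z, hz, hza⟩ :=
    ((h.filter_mono (nhdsWithin_mono _ Iio_subset_Iic_self)).and (Ico_mem_nhdsLT ha)).exists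
  exact ⟨z, hza, by rw [hz]; nlinarith [hza.2]⟩

end HasAffineSlope

lemma isTypeII_iff : IsTypeII g x ↔ 0 < x ∧ x < 1 ∧ ∃ s₁ s₂, s₁ * s₂ < 0 ∧
    HasAffineSlope g s₁ (𝓝[≤] x) x ∧ HasAffineSlope g s₂ (𝓝[≥] x) x := by
  constructor
  · rintro ⟨hx0, hx1, δ, hδ, s₁, b₁, s₂, b₂, hs, hl, hr⟩
    exact ⟨hx0, hx1, s₁, s₂, hs,
      hasAffineSlope_of_eqOn (Icc_mem_nhdsLE (by linarith)) ⟨by linarith, le_rfl⟩ hl,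
      hasAffineSlope_of_eqOn (Icc_mem_nhdsGE (by linarith)) ⟨le_rfl, by linarith⟩ hr⟩
  · rintro ⟨hx0, hx1, s₁, s₂, hs, hl, hr⟩
    obtain ⟨a, hax, ha⟩ := mem_nhdsLE_iff_exists_Icc_subset.1 hl
    obtain ⟨b, hxb, hb⟩ := mem_nhdsGE_iff_exists_Icc_subset.1 hr
    have hδa := min_le_left (x - a) (b - x)
    have hδb := min_le_right (x - a) (b - x)
    refine ⟨hx0, hx1, min (x - a) (b - x), lt_min (by linarith) (by linarith),
      s₁, g x - s₁ * x, s₂, g x - s₂ * x, hs, fun z hz => ?_, fun z hz => ?_⟩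
    · have : g z = g x + s₁ * (z - x) := ha ⟨by linarith [hz.1], hz.2⟩
      linarith
    · have : g z = g x + s₂ * (z - x) := hb ⟨hz.1, by linarith [hz.2]⟩
      linarith

lemma not_isTypeII_of_hasAffineSlope (h₁ : HasAffineSlope g s₁ (𝓝[≤] x) x)
    (h₂ : HasAffineSlope g s₂ (𝓝[≥] x) x) (hs : 0 ≤ s₁ * s₂) : ¬IsTypeII g x := by
  intro hx
  obtain ⟨-, -, t₁, t₂, ht, ht₁, ht₂⟩ := isTypeII_iff.1 hx
  have hne₁ : ∃ᶠ z in 𝓝[≤] x, z ≠ x :=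
    ((eventually_nhdsWithin_of_forall (s := Iio x) fun z hz => ne_of_lt hz).frequently).filter_mono
      (nhdsWithin_mono _ Iio_subset_Iic_self)
  have hne₂ : ∃ᶠ z in 𝓝[≥] x, z ≠ x :=
    ((eventually_nhdsWithin_of_forall (s := Ioi x) fun z hz => ne_of_gt hz).frequently).filter_mono
      (nhdsWithin_mono _ Ioi_subset_Ici_self)
  rw [ht₁.unique h₁ hne₁, ht₂.unique h₂ hne₂] at ht
  linarith

lemma not_isTypeII_of_hasAffineSlope_nhds (h : HasAffineSlope g s (𝓝 x) x) : ¬IsTypeII g x :=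
  not_isTypeII_of_hasAffineSlope (h.mono nhdsWithin_le_nhds) (h.mono nhdsWithin_le_nhds)
    (mul_self_nonneg s)

end AffineSlope

def PreservesVolume (g : ℝ → ℝ) : Prop :=
  ∀ A ⊆ Icc (0:ℝ) 1, MeasurableSet A → volume (g ⁻¹' A ∩ Icc 0 1) = volume A

lemma slope_ne_zero_of_preservesVolume {g : ℝ → ℝ} (hm : MapsTo g (Icc 0 1) (Icc 0 1))
    (hpres : PreservesVolume g) {a b s c : ℝ} (hab : a < b) (ha : 0 ≤ a) (hb : b ≤ 1)
    (h : ∀ z ∈ Icc a b, g z = s * z + c) : s ≠ 0 := by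
  rintro rfl
  have hc : c ∈ Icc (0:ℝ) 1 := by
    simpa [h a ⟨le_rfl, hab.le⟩] using hm ⟨ha, hab.le.trans hb⟩
  have hsub : Icc a b ⊆ g ⁻¹' {c} ∩ Icc 0 1 := fun z hz =>
    ⟨by simp [h z hz], ha.trans hz.1, hz.2.trans hb⟩
  have hvol := measure_mono (μ := volume) hsub
  rw [hpres {c} (singleton_subset_iff.2 hc) (measurableSet_singleton c), Real.volume_singleton,
    Real.volume_Icc, nonpos_iff_eq_zero, ENNReal.ofReal_eq_zero] at hvol
  linarith

section Partition

variable {p : ℕ → ℝ} {n : ℕ} {x : ℝ}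

lemma exists_lt_le_succ (h0 : p 0 < x) (hn : x ≤ p n) : ∃ i < n, p i < x ∧ x ≤ p (i + 1) := by
  classical
  have hex : ∃ k, x ≤ p k := ⟨n, hn⟩
  have hk : Nat.find hex ≠ 0 := fun h => (Nat.find_spec hex).not_gt (h ▸ h0)
  have hkn := Nat.find_min' hex hn
  refine ⟨Nat.find hex - 1, by omega, not_le.1 (Nat.find_min hex (by omega)), ?_⟩
  rw [Nat.sub_add_cancel (Nat.pos_of_ne_zero hk)]
  exact Nat.find_spec hex

lemma exists_le_lt_succ (h0 : p 0 ≤ x) (hn : x < p n) : ∃ i < n, p i ≤ x ∧ x < p (i + 1) := by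
  classical
  have hex : ∃ k, x < p k := ⟨n, hn⟩
  have hk : Nat.find hex ≠ 0 := fun h => (Nat.find_spec hex).not_ge (h ▸ h0)
  have hkn := Nat.find_min' hex hn
  refine ⟨Nat.find hex - 1, by omega, not_lt.1 (Nat.find_min hex (by omega)), ?_⟩
  rw [Nat.sub_add_cancel (Nat.pos_of_ne_zero hk)]
  exact Nat.find_spec hex

lemma mem_Icc_zero_one_of_le (hp0 : p 0 = 0) (hpn : p n = 1) (hp : ∀ i < n, p i < p (i + 1)) {i : ℕ}
    (hi : i ≤ n) : p i ∈ Icc (0:ℝ) 1 := by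
  have hmono := (strictMonoOn_Iic_of_lt_succ hp).monotoneOn
  exact ⟨hp0 ▸ hmono (mem_Iic.2 (Nat.zero_le n)) hi (Nat.zero_le i), hpn ▸ hmono hi (mem_Iic.2 le_rfl) hi⟩

end Partition

namespace PWAffine

variable {g : ℝ → ℝ} {x : ℝ}

lemma exists_slope_nhdsLE (hp : PWAffine g) (hm : MapsTo g (Icc 0 1) (Icc 0 1))
    (hpres : PreservesVolume g) (hx : x ∈ Ioc (0:ℝ) 1) :
    ∃ s ≠ 0, HasAffineSlope g s (𝓝[≤] x) x := by
  obtain ⟨n, p, -, hp0, hpn, hlt, haff⟩ := hp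
  obtain ⟨i, hi, hpx, hxp⟩ := exists_lt_le_succ (hp0 ▸ hx.1 : p 0 < x) (hpn ▸ hx.2)
  obtain ⟨s, c, h⟩ := haff i hi
  have h' : ∀ z ∈ Icc (p i) x, g z = s * z + c := fun z hz => h z ⟨hz.1, hz.2.trans hxp⟩
  exact ⟨s, slope_ne_zero_of_preservesVolume hm hpres hpx
      (mem_Icc_zero_one_of_le hp0 hpn hlt hi.le).1 hx.2 h',
    hasAffineSlope_of_eqOn (Icc_mem_nhdsLE hpx) ⟨hpx.le, le_rfl⟩ h'⟩

lemma exists_slope_nhdsGE (hp : PWAffine g) (hm : MapsTo g (Icc 0 1) (Icc 0 1))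
    (hpres : PreservesVolume g) (hx : x ∈ Ico (0:ℝ) 1) :
    ∃ s ≠ 0, HasAffineSlope g s (𝓝[≥] x) x := by
  obtain ⟨n, p, -, hp0, hpn, hlt, haff⟩ := hp
  obtain ⟨i, hi, hpx, hxp⟩ := exists_le_lt_succ (hp0 ▸ hx.1 : p 0 ≤ x) (hpn ▸ hx.2)
  obtain ⟨s, c, h⟩ := haff i hi
  have h' : ∀ z ∈ Icc x (p (i + 1)), g z = s * z + c := fun z hz => h z ⟨hpx.trans hz.1, hz.2⟩
  exact ⟨s, slope_ne_zero_of_preservesVolume hm hpres hxp hx.1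
      (mem_Icc_zero_one_of_le hp0 hpn hlt hi).2 h',
    hasAffineSlope_of_eqOn (Icc_mem_nhdsGE hxp) ⟨le_rfl, hxp.le⟩ h'⟩

lemma exists_finite_hasAffineSlope_nhds (hp : PWAffine g) :
    ∃ P : Set ℝ, P.Finite ∧ ∀ x ∈ Ioo (0:ℝ) 1, x ∉ P → ∃ s, HasAffineSlope g s (𝓝 x) x := by
  obtain ⟨n, p, -, hp0, hpn, -, haff⟩ := hp
  refine ⟨p '' Iic n, (finite_Iic n).image p, fun x hx hxP => ?_⟩
  obtain ⟨i, hi, hpx, hxp⟩ := exists_lt_le_succ (hp0 ▸ hx.1 : p 0 < x) (hpn ▸ hx.2.le)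
  have hxp' : x < p (i + 1) := hxp.lt_of_ne fun h => hxP ⟨i + 1, mem_Iic.2 hi, h.symm⟩
  obtain ⟨s, c, h⟩ := haff i hi
  exact ⟨s, hasAffineSlope_of_eqOn (Icc_mem_nhds hpx hxp') ⟨hpx.le, hxp⟩ h⟩

lemma finite_fiber (hp : PWAffine g) (hm : MapsTo g (Icc 0 1) (Icc 0 1))
    (hpres : PreservesVolume g) (c : ℝ) : (Icc 0 1 ∩ g ⁻¹' {c}).Finite := by
  obtain ⟨n, p, hn, hp0, hpn, hlt, haff⟩ := hp
  have hcover : ∀ x ∈ Icc (0:ℝ) 1, ∃ i < n, x ∈ Icc (p i) (p (i + 1)) := by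
    rintro x ⟨hx0, hx1⟩
    rcases hx0.eq_or_lt with rfl | hx0
    · exact ⟨0, hn, ⟨hp0.le, hp0 ▸ (hlt 0 hn).le⟩⟩
    · obtain ⟨i, hi, hpx, hxp⟩ := exists_lt_le_succ (hp0 ▸ hx0 : p 0 < x) (hpn ▸ hx1)
      exact ⟨i, hi, hpx.le, hxp⟩
  have hpiece : ∀ i < n, (Icc (p i) (p (i + 1)) ∩ g ⁻¹' {c}).Finite := by
    intro i hi
    obtain ⟨s, b, h⟩ := haff i hi
    have hs := slope_ne_zero_of_preservesVolume hm hpres (hlt i hi)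
      (mem_Icc_zero_one_of_le hp0 hpn hlt hi.le).1 (mem_Icc_zero_one_of_le hp0 hpn hlt hi).2 h
    refine (finite_singleton ((c - b) / s)).subset fun z ⟨hz, hgz⟩ => ?_
    rw [mem_singleton_iff, eq_div_iff hs]
    have := h z hz
    rw [mem_preimage, mem_singleton_iff] at hgz
    linarith
  refine ((finite_Iio n).biUnion fun i hi => hpiece i hi).subset fun x ⟨hx, hgx⟩ => ?_
  obtain ⟨i, hi, hxi⟩ := hcover x hx
  exact mem_biUnion (mem_Iio.2 hi) ⟨hxi, hgx⟩

end PWAffine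

lemma exists_increasing_crossing {g : ℝ → ℝ} {a b y : ℝ} (hab : a < b)
    (hc : ContinuousOn g (Icc a b)) (ha : g a < y) (hb : y < g b)
    (hL : ∀ x ∈ Ioo a b, ∃ s, HasAffineSlope g s (𝓝[≤] x) x)
    (hR : ∀ x ∈ Ioo a b, ∃ s ≠ 0, HasAffineSlope g s (𝓝[≥] x) x) :
    ∃ x ∈ Ioo a b, g x = y ∧ ∃ s₁ s₂, 0 < s₁ ∧ 0 < s₂ ∧
      HasAffineSlope g s₁ (𝓝[≤] x) x ∧ HasAffineSlope g s₂ (𝓝[≥] x) x := by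
  set X := Icc a b ∩ g ⁻¹' Iio y
  have hne : X.Nonempty := ⟨a, left_mem_Icc.2 hab.le, ha⟩
  have hlub : IsLUB X (sSup X) := isLUB_csSup hne ⟨b, fun t ht => ht.1.2⟩
  set x := sSup X
  have hx : x ∈ Icc a b ∩ g ⁻¹' Iic y :=
    (hc.preimage_isClosed_of_isClosed isClosed_Icc isClosed_Iic).closure_subset_iff.2
      (inter_subset_inter_right _ (preimage_mono Iio_subset_Iic_self)) (hlub.mem_closure hne)
  have hxb : x < b := hx.1.2.lt_of_ne fun h => hb.not_ge (h ▸ hx.2)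
  have hright : ∀ z ∈ Ioc x b, y ≤ g z := fun z hz =>
    not_lt.1 fun hlt => hz.1.not_ge (hlub.1 ⟨⟨hx.1.1.trans hz.1.le, hz.2⟩, hlt⟩)
  -- `g x ≥ y` by continuity from the right, where `g ≥ y`
  have hgx : g x = y := by
    have hcont : ContinuousWithinAt g (Ioc x b) x :=
      (hc x hx.1).mono (Ioc_subset_Icc_self.trans (Icc_subset_Icc_left hx.1.1))
    have := left_nhdsWithin_Ioc_neBot hxb
    exact le_antisymm hx.2 (ge_of_tendsto hcont (eventually_nhdsWithin_of_forall hright))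
  have hax : a < x := hx.1.1.lt_of_ne fun h => (h ▸ ha).ne hgx
  obtain ⟨s₁, hs₁⟩ := hL x ⟨hax, hxb⟩
  obtain ⟨s₂, hs₂0, hs₂⟩ := hR x ⟨hax, hxb⟩
  refine ⟨x, ⟨hax, hxb⟩, hgx, s₁, s₂, ?_, ?_, hs₁, hs₂⟩
  · exact hs₁.pos_of_frequently_lt ((hlub.frequently_mem hne).mono fun z hz => hgx ▸ hz.2)
  · refine hs₂.pos_of_eventually_le hs₂0 ?_
    filter_upwards [Icc_mem_nhdsGE hxb] with z hz
    rcases hz.1.eq_or_lt with rfl | hxz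
    · exact le_rfl
    · exact hgx ▸ hright z ⟨hxz, hz.2⟩

namespace PWAffine

variable {g : ℝ → ℝ}

lemma exists_crossing (hp : PWAffine g) (hc : ContinuousOn g (Icc 0 1))
    (hm : MapsTo g (Icc 0 1) (Icc 0 1)) (hs : SurjOn g (Icc 0 1) (Icc 0 1))
    (hpres : PreservesVolume g) {y : ℝ} (hy : y ∈ Ioo (0:ℝ) 1) :
    ∃ x ∈ Ioo (0:ℝ) 1, g x = y ∧ ∃ s₁ s₂, 0 < s₁ * s₂ ∧
      HasAffineSlope g s₁ (𝓝[≤] x) x ∧ HasAffineSlope g s₂ (𝓝[≥] x) x := by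
  obtain ⟨u, hu, hgu⟩ := hs (left_mem_Icc.2 zero_le_one)
  obtain ⟨v, hv, hgv⟩ := hs (right_mem_Icc.2 zero_le_one)
  have hL : ∀ x ∈ Ioo (0:ℝ) 1, ∃ s ≠ 0, HasAffineSlope g s (𝓝[≤] x) x := fun x hx =>
    hp.exists_slope_nhdsLE hm hpres ⟨hx.1, hx.2.le⟩
  have hR : ∀ x ∈ Ioo (0:ℝ) 1, ∃ s ≠ 0, HasAffineSlope g s (𝓝[≥] x) x := fun x hx =>
    hp.exists_slope_nhdsGE hm hpres ⟨hx.1.le, hx.2⟩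
  rcases lt_or_gt_of_ne (show u ≠ v by rintro rfl; linarith) with huv | hvu
  · have hsub : Ioo u v ⊆ Ioo 0 1 := Ioo_subset_Ioo hu.1 hv.2
    obtain ⟨x, hx, hgx, s₁, s₂, hs₁, hs₂, h₁, h₂⟩ := exists_increasing_crossing huv
      (hc.mono (Icc_subset_Icc hu.1 hv.2)) (hgu ▸ hy.1) (hgv ▸ hy.2)
      (fun x hx => (hL x (hsub hx)).imp fun s h => h.2)
      (fun x hx => hR x (hsub hx))
    exact ⟨x, hsub hx, hgx, s₁, s₂, mul_pos hs₁ hs₂, h₁, h₂⟩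
  · have hsub : Ioo v u ⊆ Ioo 0 1 := Ioo_subset_Ioo hv.1 hu.2
    obtain ⟨x, hx, hgx, s₁, s₂, hs₁, hs₂, h₁, h₂⟩ := exists_increasing_crossing
      (g := fun z => -g z) (y := -y) hvu (hc.mono (Icc_subset_Icc hv.1 hu.2)).neg
      (by linarith [hy.2]) (by linarith [hy.1])
      (fun x hx => let ⟨s, _, h⟩ := hL x (hsub hx); ⟨-s, h.neg⟩)
      (fun x hx => let ⟨s, hs, h⟩ := hR x (hsub hx); ⟨-s, neg_ne_zero.2 hs, h.neg⟩)
    refine ⟨x, hsub hx, neg_inj.1 hgx, -s₁, -s₂, by nlinarith, ?_, ?_⟩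
    · simpa using h₁.neg
    · simpa using h₂.neg

end PWAffine

section Composition

variable {g₁ g₂ : ℝ → ℝ} {x : ℝ}

lemma IsTypeII.comp (hx : IsTypeII g₂ x) (hp₁ : PWAffine g₁)
    (hm₁ : MapsTo g₁ (Icc 0 1) (Icc 0 1)) (hpres₁ : PreservesVolume g₁)
    (hm₂ : MapsTo g₂ (Icc 0 1) (Icc 0 1)) : IsTypeII (g₁ ∘ g₂) x := by
  obtain ⟨hx0, hx1, s₁, s₂, hs, h₁, h₂⟩ := isTypeII_iff.1 hx
  have hprod {t : ℝ} (ht : t ≠ 0) : t * s₁ * (t * s₂) < 0 := by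
    rw [mul_mul_mul_comm]
    exact mul_neg_of_pos_of_neg (mul_self_pos.2 ht) hs
  rcases lt_or_gt_of_ne (left_ne_zero_of_mul hs.ne) with hs₁ | hs₁
  · -- a local minimum of `g₂`, necessarily below the top of `[0, 1]`
    have hs₂ : 0 < s₂ := pos_of_mul_neg_right hs hs₁.le
    obtain ⟨z, hz, hgz⟩ := h₂.exists_gt_of_nhdsGE hs₂ hx1
    have hy : g₂ x ∈ Ico (0:ℝ) 1 :=
      ⟨(hm₂ ⟨hx0.le, hx1.le⟩).1, hgz.trans_le (hm₂ ⟨hx0.le.trans hz.1.le, hz.2⟩).2⟩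
    obtain ⟨t, ht, h⟩ := hp₁.exists_slope_nhdsGE hm₁ hpres₁ hy
    exact isTypeII_iff.2 ⟨hx0, hx1, t * s₁, t * s₂, hprod ht,
      h.comp h₁ (h₁.tendsto_nhdsLE_nhdsGE hs₁.le), h.comp h₂ (h₂.tendsto_nhdsGE_nhdsGE hs₂.le)⟩
  · -- a local maximum of `g₂`, necessarily above the bottom of `[0, 1]`
    have hs₂ : s₂ < 0 := neg_of_mul_neg_right hs hs₁.le
    obtain ⟨z, hz, hgz⟩ := h₁.exists_lt_of_nhdsLE hs₁ hx0
    have hy : g₂ x ∈ Ioc (0:ℝ) 1 :=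
      ⟨(hm₂ ⟨hz.1, hz.2.le.trans hx1.le⟩).1.trans_lt hgz, (hm₂ ⟨hx0.le, hx1.le⟩).2⟩
    obtain ⟨t, ht, h⟩ := hp₁.exists_slope_nhdsLE hm₁ hpres₁ hy
    exact isTypeII_iff.2 ⟨hx0, hx1, t * s₁, t * s₂, hprod ht,
      h.comp h₁ (h₁.tendsto_nhdsLE_nhdsLE hs₁.le), h.comp h₂ (h₂.tendsto_nhdsGE_nhdsLE hs₂.le)⟩

lemma exists_isTypeII_comp_not_isTypeII {y : ℝ} (hy : IsTypeII g₁ y) (hp₂ : PWAffine g₂)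
    (hc₂ : ContinuousOn g₂ (Icc 0 1)) (hm₂ : MapsTo g₂ (Icc 0 1) (Icc 0 1))
    (hs₂ : SurjOn g₂ (Icc 0 1) (Icc 0 1)) (hpres₂ : PreservesVolume g₂) :
    ∃ x, IsTypeII (g₁ ∘ g₂) x ∧ ¬IsTypeII g₂ x ∧ g₂ x = y := by
  obtain ⟨hy0, hy1, t₁, t₂, ht, ht₁, ht₂⟩ := isTypeII_iff.1 hy
  obtain ⟨x, hx, rfl, s₁, s₂, hs, h₁, h₂⟩ := hp₂.exists_crossing hc₂ hm₂ hs₂ hpres₂ ⟨hy0, hy1⟩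
  refine ⟨x, isTypeII_iff.2 ⟨hx.1, hx.2, ?_⟩, not_isTypeII_of_hasAffineSlope h₁ h₂ hs.le, rfl⟩
  rcases lt_or_gt_of_ne (left_ne_zero_of_mul hs.ne') with hs₁ | hs₁
  · -- `g₂` decreases through `y`, so the two sides of `y` are swapped
    have hs₂ : s₂ < 0 := neg_of_mul_pos_right hs hs₁.le
    refine ⟨t₂ * s₁, t₁ * s₂, ?_, ht₂.comp h₁ (h₁.tendsto_nhdsLE_nhdsGE hs₁.le),
      ht₁.comp h₂ (h₂.tendsto_nhdsGE_nhdsLE hs₂.le)⟩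
    rw [mul_mul_mul_comm, mul_comm t₂]
    exact mul_neg_of_neg_of_pos ht hs
  · have hs₂ : 0 < s₂ := pos_of_mul_pos_right hs hs₁.le
    refine ⟨t₁ * s₁, t₂ * s₂, ?_, ht₁.comp h₁ (h₁.tendsto_nhdsLE_nhdsLE hs₁.le),
      ht₂.comp h₂ (h₂.tendsto_nhdsGE_nhdsGE hs₂.le)⟩
    rw [mul_mul_mul_comm]
    exact mul_neg_of_neg_of_pos ht hs

lemma PWAffine.finite_setOf_isTypeII_comp (hp₁ : PWAffine g₁) (hp₂ : PWAffine g₂)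
    (hm₂ : MapsTo g₂ (Icc 0 1) (Icc 0 1)) (hpres₂ : PreservesVolume g₂) :
    {x | IsTypeII (g₁ ∘ g₂) x}.Finite := by
  obtain ⟨P₁, hP₁, h₁⟩ := hp₁.exists_finite_hasAffineSlope_nhds
  obtain ⟨P₂, hP₂, h₂⟩ := hp₂.exists_finite_hasAffineSlope_nhds
  let F : Set ℝ := insert 0 (insert 1 P₁)
  have hF : (Icc 0 1 ∩ g₂ ⁻¹' F).Finite :=
    ((hP₁.insert 1).insert 0).biUnion (fun c _ => hp₂.finite_fiber hm₂ hpres₂ c) |>.subset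
      fun x hx => mem_biUnion hx.2 ⟨hx.1, rfl⟩
  refine (hP₂.union hF).subset fun x hx => ?_
  by_contra hxP
  have hxI : x ∈ Ioo (0:ℝ) 1 := ⟨hx.1, hx.2.1⟩
  have hyF : g₂ x ∉ F := fun h => hxP (Or.inr ⟨Ioo_subset_Icc_self hxI, h⟩)
  simp only [F, mem_insert_iff, not_or] at hyF
  obtain ⟨hy0, hy1, hyP⟩ := hyF
  obtain ⟨s, hs⟩ := h₂ x hxI fun h => hxP (Or.inl h)
  have hy := hm₂ (Ioo_subset_Icc_self hxI)
  obtain ⟨t, ht⟩ := h₁ (g₂ x) ⟨hy.1.lt_of_ne' hy0, hy.2.lt_of_ne hy1⟩ hyP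
  exact not_isTypeII_of_hasAffineSlope_nhds (ht.comp hs (hs.tendsto le_rfl)) hx

end Composition

lemma Set.ncard_add_ncard_le_of_subset_image {α β : Type*} {s : Set β} {t u : Set α} (f : α → β)
    (hu : u.Finite) (htu : t ⊆ u) (hs : s ⊆ f '' (u \ t)) : s.ncard + t.ncard ≤ u.ncard := by
  have hs' : s.ncard ≤ u.ncard - t.ncard :=
    calc s.ncard ≤ (f '' (u \ t)).ncard := ncard_le_ncard hs (hu.sdiff.image f)
      _ ≤ (u \ t).ncard := ncard_image_le hu.sdiff
      _ = u.ncard - t.ncard := ncard_sdiff htu (hu.subset htu)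
  have := ncard_le_ncard htu hu
  omega

theorem stmt_12_general (g₁ g₂ : ℝ → ℝ)
    (h₂c : ContinuousOn g₂ (Icc 0 1))
    (h₁m : MapsTo g₁ (Icc (0:ℝ) 1) (Icc (0:ℝ) 1))
    (h₂m : MapsTo g₂ (Icc (0:ℝ) 1) (Icc (0:ℝ) 1))
    (h₂s : SurjOn g₂ (Icc (0:ℝ) 1) (Icc (0:ℝ) 1))
    (h₁p : PWAffine g₁) (h₂p : PWAffine g₂)
    (h₁pres : ∀ A ⊆ Icc (0:ℝ) 1, MeasurableSet A →
      volume (g₁ ⁻¹' A ∩ Icc 0 1) = volume A)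
    (h₂pres : ∀ A ⊆ Icc (0:ℝ) 1, MeasurableSet A →
      volume (g₂ ⁻¹' A ∩ Icc 0 1) = volume A) :
    {x : ℝ | IsTypeII g₁ x}.ncard + {x : ℝ | IsTypeII g₂ x}.ncard ≤
      {x : ℝ | IsTypeII (g₁ ∘ g₂) x}.ncard := by
  refine Set.ncard_add_ncard_le_of_subset_image g₂
    (h₁p.finite_setOf_isTypeII_comp h₂p h₂m h₂pres)
    (fun x hx => IsTypeII.comp hx h₁p h₁m h₁pres h₂m) fun y hy => ?_
  obtain ⟨x, hx, hx₂, rfl⟩ := exists_isTypeII_comp_not_isTypeII hy h₂p h₂c h₂m h₂s h₂pres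
  exact ⟨x, ⟨hx, hx₂⟩, rfl⟩

theorem stmt_12 (g₁ g₂ : ℝ → ℝ)
    (h₁c : ContinuousOn g₁ (Icc 0 1)) (h₂c : ContinuousOn g₂ (Icc 0 1))
    (h₁m : MapsTo g₁ (Icc (0:ℝ) 1) (Icc (0:ℝ) 1))
    (h₂m : MapsTo g₂ (Icc (0:ℝ) 1) (Icc (0:ℝ) 1))
    (h₁s : SurjOn g₁ (Icc (0:ℝ) 1) (Icc (0:ℝ) 1))
    (h₂s : SurjOn g₂ (Icc (0:ℝ) 1) (Icc (0:ℝ) 1))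
    (h₁p : PWAffine g₁) (h₂p : PWAffine g₂)
    (h₁pres : ∀ A ⊆ Icc (0:ℝ) 1, MeasurableSet A →
      volume (g₁ ⁻¹' A ∩ Icc 0 1) = volume A)
    (h₂pres : ∀ A ⊆ Icc (0:ℝ) 1, MeasurableSet A →
      volume (g₂ ⁻¹' A ∩ Icc 0 1) = volume A) :
    {x : ℝ | IsTypeII g₁ x}.ncard + {x : ℝ | IsTypeII g₂ x}.ncard ≤
      {x : ℝ | IsTypeII (g₁ ∘ g₂) x}.ncard :=
  stmt_12_general g₁ g₂ h₂c h₁m h₂m h₂s h₁p h₂p h₁pres h₂pres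
end

section
/- Let A be an N×N column-stochastic non-negative matrix (each column sums to 1) whose associated directed graph (arc j → i when A_{i,j} > 0) is strongly connected. Then there exists a unique vector v ∈ ℝ^N with Av = v, all entries vᵢ > 0, and ∑ vᵢ = 1. -/
/-- Entries of powers of a nonnegative matrix are nonnegative. -/
lemma pf_pow_nonneg {N : ℕ} (A : Matrix (Fin N) (Fin N) ℝ)
    (hnonneg : ∀ i j, 0 ≤ A i j) (k : ℕ) : ∀ i j, 0 ≤ (A ^ k) i j := by
  induction k with
  | zero =>
    intro i j
    by_cases h : i = j <;> simp [Matrix.one_apply, h]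
  | succ n ih =>
    intro i j
    rw [pow_succ, Matrix.mul_apply]
    exact Finset.sum_nonneg fun c _ => mul_nonneg (ih i c) (hnonneg c j)

/-- A fixed vector of `A` is fixed by all powers. -/
lemma pf_pow_fixed {N : ℕ} (A : Matrix (Fin N) (Fin N) ℝ) (w : Fin N → ℝ)
    (hw : A.mulVec w = w) (k : ℕ) : (A ^ k).mulVec w = w := by
  induction k with
  | zero => simp
  | succ n ih =>
    rw [pow_succ', ← Matrix.mulVec_mulVec, ih, hw]

/-- A nonnegative nonzero fixed vector of an irreducible nonnegative matrix
is strictly positive. -/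
lemma pf_fixed_pos {N : ℕ} (A : Matrix (Fin N) (Fin N) ℝ)
    (hnonneg : ∀ i j, 0 ≤ A i j)
    (hirr : ∀ i j, ∃ k : ℕ, 0 < k ∧ 0 < (A ^ k) i j)
    (w : Fin N → ℝ) (hw : A.mulVec w = w) (hw0 : ∀ i, 0 ≤ w i)
    (j : Fin N) (hj : 0 < w j) (i : Fin N) : 0 < w i := by
  obtain ⟨k, _, hAk⟩ := hirr i j
  have hfix := pf_pow_fixed A w hw k
  have : w i = ∑ c : Fin N, (A ^ k) i c * w c := by
    rw [← congrFun hfix i]; rfl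
  rw [this]
  have hterm : 0 < (A ^ k) i j * w j := mul_pos hAk hj
  calc (0 : ℝ) < (A ^ k) i j * w j := hterm
    _ ≤ ∑ c : Fin N, (A ^ k) i c * w c :=
      Finset.single_le_sum
        (fun c _ => mul_nonneg (pf_pow_nonneg A hnonneg k i c) (hw0 c))
        (Finset.mem_univ j)

/-- Column sums 1 means `mulVec` preserves total sum. -/
lemma pf_sum_mulVec {N : ℕ} (A : Matrix (Fin N) (Fin N) ℝ)
    (hcol : ∀ j, ∑ i : Fin N, A i j = 1) (w : Fin N → ℝ) :
    ∑ i : Fin N, (A.mulVec w) i = ∑ i : Fin N, w i := by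
  simp only [Matrix.mulVec, dotProduct]
  rw [Finset.sum_comm]
  simp [← Finset.sum_mul, hcol]

theorem stmt_16 (N : ℕ) (hN : 0 < N) (A : Matrix (Fin N) (Fin N) ℝ)
    (hnonneg : ∀ i j, 0 ≤ A i j)
    (hcol : ∀ j, ∑ i : Fin N, A i j = 1)
    (hirr : ∀ i j, ∃ k : ℕ, 0 < k ∧ 0 < (A ^ k) i j) :
    ∃! v : Fin N → ℝ, A.mulVec v = v ∧ (∀ i, 0 < v i) ∧ ∑ i : Fin N, v i = 1 := by
  haveI : NeZero N := ⟨hN.ne'⟩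
  -- Step 1: det (A - 1) = 0, via transpose (all-ones left eigenvector).
  have hdetT : (A.transpose - 1).det = 0 := by
    rw [← Matrix.exists_mulVec_eq_zero_iff]
    refine ⟨fun _ => 1, ?_, ?_⟩
    · intro h
      have := congrFun h ⟨0, hN⟩
      norm_num at this
    · ext j
      simp [Matrix.sub_mulVec, Matrix.mulVec, dotProduct, Matrix.transpose_apply,
        hcol j, Matrix.one_apply]
  have hdet : (A - 1).det = 0 := by
    have : (A - 1).transpose = A.transpose - 1 := by
      rw [Matrix.transpose_sub, Matrix.transpose_one]
    rw [← Matrix.det_transpose, this, hdetT]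
  -- Step 2: get a nonzero fixed vector v0.
  obtain ⟨v0, hv0ne, hv0⟩ := Matrix.exists_mulVec_eq_zero_iff.mpr hdet
  have hfix0 : A.mulVec v0 = v0 := by
    have := hv0
    rw [Matrix.sub_mulVec, Matrix.one_mulVec, sub_eq_zero] at this
    exact this
  -- Step 3: w = |v0| is a nonnegative fixed vector.
  set w : Fin N → ℝ := fun i => |v0 i| with hwdef
  have hAw_ge : ∀ i, w i ≤ (A.mulVec w) i := by
    intro i
    have h1 : w i = |(A.mulVec v0) i| := by rw [hfix0]
    rw [h1]
    calc |(A.mulVec v0) i| = |∑ j : Fin N, A i j * v0 j| := rfl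
      _ ≤ ∑ j : Fin N, |A i j * v0 j| := Finset.abs_sum_le_sum_abs _ _
      _ = ∑ j : Fin N, A i j * w j := by
          refine Finset.sum_congr rfl fun j _ => ?_
          rw [abs_mul, abs_of_nonneg (hnonneg i j)]
      _ = (A.mulVec w) i := rfl
  have hsum : ∑ i : Fin N, (A.mulVec w) i = ∑ i : Fin N, w i := pf_sum_mulVec A hcol w
  have hAw : A.mulVec w = w := by
    have hz : ∑ i : Fin N, ((A.mulVec w) i - w i) = 0 := by
      rw [Finset.sum_sub_distrib, hsum, sub_self]
    have := (Finset.sum_eq_zero_iff_of_nonneg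
      (fun i _ => sub_nonneg.mpr (hAw_ge i))).mp hz
    funext i
    have := this i (Finset.mem_univ i)
    linarith [this]
  have hw0 : ∀ i, 0 ≤ w i := fun i => abs_nonneg _
  have hex : ∃ j, 0 < w j := by
    by_contra h
    push_neg at h
    apply hv0ne
    funext i
    exact abs_eq_zero.mp (le_antisymm (h i) (hw0 i))
  obtain ⟨j0, hj0⟩ := hex
  have hwpos : ∀ i, 0 < w i := pf_fixed_pos A hnonneg hirr w hAw hw0 j0 hj0
  -- Step 4: normalize.
  have hcpos : 0 < ∑ i : Fin N, w i :=
    Finset.sum_pos (fun i _ => hwpos i) ⟨⟨0, hN⟩, Finset.mem_univ _⟩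
  set c : ℝ := (∑ i : Fin N, w i)⁻¹ with hcdef
  have hc : 0 < c := inv_pos.mpr hcpos
  refine ⟨c • w, ⟨?_, ?_, ?_⟩, ?_⟩
  · rw [Matrix.mulVec_smul, hAw]
  · intro i; exact mul_pos hc (hwpos i)
  · simp only [Pi.smul_apply, smul_eq_mul]
    rw [← Finset.mul_sum, hcdef, inv_mul_cancel₀ hcpos.ne']
  -- Uniqueness
  · rintro u ⟨hu, hupos, husum⟩
    set v : Fin N → ℝ := c • w with hvdef
    have hvfix : A.mulVec v = v := by rw [hvdef, Matrix.mulVec_smul, hAw]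
    have hvpos : ∀ i, 0 < v i := fun i => mul_pos hc (hwpos i)
    have hvsum : ∑ i : Fin N, v i = 1 := by
      simp only [hvdef, Pi.smul_apply, smul_eq_mul]
      rw [← Finset.mul_sum, hcdef, inv_mul_cancel₀ hcpos.ne']
    -- t = min over i of u i / v i
    set t : ℝ := Finset.univ.inf' (Finset.univ_nonempty) (fun i => u i / v i) with htdef
    obtain ⟨i0, _, hi0⟩ := Finset.exists_mem_eq_inf' (Finset.univ_nonempty)
      (fun i => u i / v i)
    set d : Fin N → ℝ := fun i => u i - t * v i with hddef
    have hd0 : ∀ i, 0 ≤ d i := by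
      intro i
      have ht_le : t ≤ u i / v i := Finset.inf'_le _ (Finset.mem_univ i)
      have := (div_le_div_iff_of_pos_right (hvpos i)).mpr ht_le
      have h2 : t * v i ≤ u i := by
        rw [le_div_iff₀ (hvpos i)] at ht_le
        exact ht_le
      simpa [hddef] using sub_nonneg.mpr h2
    have hdi0 : d i0 = 0 := by
      simp only [hddef]
      have : t = u i0 / v i0 := hi0
      rw [this, div_mul_cancel₀ _ (hvpos i0).ne']
      ring
    have hdfix : A.mulVec d = d := by
      have : d = u - t • v := by funext i; simp [hddef]
      rw [this, Matrix.mulVec_sub, Matrix.mulVec_smul, hu, hvfix]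
    have hdzero : ∀ i, d i = 0 := by
      by_contra h
      push_neg at h
      obtain ⟨j, hj⟩ := h
      have hjpos : 0 < d j := lt_of_le_of_ne (hd0 j) (Ne.symm hj)
      have := pf_fixed_pos A hnonneg hirr d hdfix hd0 j hjpos i0
      rw [hdi0] at this
      exact lt_irrefl 0 this
    have huv : u = t • v := by
      funext i
      have := hdzero i
      simp only [hddef] at this
      simp only [Pi.smul_apply, smul_eq_mul]
      linarith
    have ht1 : t = 1 := by
      have : ∑ i : Fin N, u i = t * ∑ i : Fin N, v i := by
        rw [huv]
        simp only [Pi.smul_apply, smul_eq_mul]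
        rw [← Finset.mul_sum]
      rw [husum, hvsum, mul_one] at this
      exact this.symm
    rw [huv, ht1, one_smul]
end

section
/- Let t : [0,1] → [0,1] be continuous, piecewise monotone on intervals I₁ < ⋯ < I_N, affine with slope of absolute value > 1 on every affine piece except one piece I_{i₀} where t is affine with slope −1 and t(I_{i₀}) = I_{j₀} with i₀ ≠ j₀, and suppose t preserves Lebesgue measure. Then |d(t∘t)/dx| > 1 at every point of [0,1] where the derivative of t∘t is defined (all but finitely many points). -/
open Set MeasureTheory

theorem stmt_17 (t : ℝ → ℝ)
    (hcont : ContinuousOn t (Icc 0 1))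
    (hmaps : MapsTo t (Icc (0:ℝ) 1) (Icc (0:ℝ) 1))
    (hpres : ∀ A ⊆ Icc (0:ℝ) 1, MeasurableSet A →
      volume (t ⁻¹' A ∩ Icc 0 1) = volume A)
    (N : ℕ) (hN : 0 < N) (q : ℕ → ℝ)
    (hq0 : q 0 = 0) (hqN : q N = 1)
    (hmono : ∀ i < N, q i < q (i + 1))
    (s b : ℕ → ℝ)
    (haff : ∀ i < N, ∀ x ∈ Icc (q i) (q (i + 1)), t x = s i * x + b i)
    (i₀ : ℕ) (hi₀ : i₀ < N) (hs₀ : s i₀ = -1)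
    (hexp : ∀ i < N, i ≠ i₀ → 1 < |s i|)
    (j₀ : ℕ) (hj₀ : j₀ < N) (hne : j₀ ≠ i₀)
    (him : t '' Icc (q i₀) (q (i₀ + 1)) = Icc (q j₀) (q (j₀ + 1))) :
    ∃ F : Set ℝ, F.Finite ∧ ∀ x ∈ Ioo (0:ℝ) 1 \ F,
      DifferentiableAt ℝ (t ∘ t) x ∧ 1 < |deriv (t ∘ t) x| := by
  have hsne : ∀ i < N, s i ≠ 0 := by
    intro i hi
    by_cases h : i = i₀
    · rw [h, hs₀]; norm_num
    · have := hexp i hi h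
      intro h0
      rw [h0] at this; simp at this; linarith
  have qmono : ∀ a b : ℕ, a ≤ b → b ≤ N → q a ≤ q b := by
    intro a c hac hcN
    induction c with
    | zero => simp_all
    | succ n ih =>
      rcases Nat.eq_or_lt_of_le hac with h | h
      · rw [h]
      · have h1 : a ≤ n := by omega
        have h2 : n ≤ N := by omega
        exact le_trans (ih h1 h2) (hmono n (by omega)).le
  have key : ∀ n ≤ N, ∀ y : ℝ, q 0 < y → y ≤ q n → (∀ j ≤ N, y ≠ q j) →
      ∃ i < N, q i < y ∧ y < q (i+1) := by
    intro n
    induction n with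
    | zero => intro _ y h1 h2 _; linarith
    | succ n ih =>
      intro hn y h1 h2 hney
      by_cases h : q n < y
      · exact ⟨n, by omega, h, lt_of_le_of_ne h2 (hney (n+1) hn)⟩
      · exact ih (by omega) y h1 (not_lt.1 h) hney
  have hfind : ∀ y : ℝ, 0 ≤ y → y ≤ 1 → (∀ j ≤ N, y ≠ q j) →
      ∃ i < N, q i < y ∧ y < q (i+1) := by
    intro y h0 h1 hney
    have : q 0 < y := by
      rw [hq0]
      refine lt_of_le_of_ne h0 ?_
      intro h
      exact hney 0 (Nat.zero_le N) (by rw [← h, hq0])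
    exact key N le_rfl y this (by rw [hqN]; exact h1) hney
  refine ⟨(q '' Set.Iic N) ∪ ⋃ i ∈ Finset.range N, ⋃ j ∈ Finset.range (N+1),
      {(q j - b i) / s i}, ?_, ?_⟩
  · apply Set.Finite.union
    · exact (Set.finite_Iic N).image q
    · apply Set.Finite.biUnion (Finset.finite_toSet _)
      intro i _
      apply Set.Finite.biUnion (Finset.finite_toSet _)
      intro j _
      exact Set.finite_singleton _
  intro x hx
  obtain ⟨hx1, hx2⟩ := hx
  have hxq : ∀ j ≤ N, x ≠ q j := by
    intro j hj hEq
    exact hx2 (Or.inl ⟨j, hj, hEq.symm⟩)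
  obtain ⟨i, hiN, hxi1, hxi2⟩ := hfind x hx1.1.le hx1.2.le hxq
  have hxIcc : x ∈ Icc (q i) (q (i+1)) := ⟨hxi1.le, hxi2.le⟩
  set y := t x with hy
  have hy01 : y ∈ Icc (0:ℝ) 1 := hmaps ⟨hx1.1.le, hx1.2.le⟩
  have hyq : ∀ j ≤ N, y ≠ q j := by
    intro j hj heq
    apply hx2
    right
    have htx : t x = s i * x + b i := haff i hiN x hxIcc
    have hxe : x = (q j - b i) / s i := by
      rw [eq_div_iff (hsne i hiN)]
      have : s i * x + b i = q j := by rw [← htx, ← heq]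
      linarith
    simp only [Set.mem_iUnion, Set.mem_singleton_iff]
    exact ⟨i, Finset.mem_range.2 hiN, j, Finset.mem_range.2 (by omega), hxe⟩
  obtain ⟨j, hjN, hyj1, hyj2⟩ := hfind y hy01.1 hy01.2 hyq
  -- derivative of t at x
  have hdx : HasDerivAt t (s i) x := by
    have h1 : HasDerivAt (fun z => s i * z + b i) (s i) x := by
      simpa using ((hasDerivAt_id x).const_mul (s i)).add_const (b i)
    apply h1.congr_of_eventuallyEq
    filter_upwards [Ioo_mem_nhds hxi1 hxi2] with z hz
    exact haff i hiN z ⟨hz.1.le, hz.2.le⟩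
  have hdy : HasDerivAt t (s j) y := by
    have h1 : HasDerivAt (fun z => s j * z + b j) (s j) y := by
      simpa using ((hasDerivAt_id y).const_mul (s j)).add_const (b j)
    apply h1.congr_of_eventuallyEq
    filter_upwards [Ioo_mem_nhds hyj1 hyj2] with z hz
    exact haff j hjN z ⟨hz.1.le, hz.2.le⟩
  have hcomp : HasDerivAt (t ∘ t) (s j * s i) x := hdy.comp x hdx
  refine ⟨hcomp.differentiableAt, ?_⟩
  rw [hcomp.deriv, abs_mul]
  have habs1 : ∀ k < N, 1 ≤ |s k| := by
    intro k hk
    by_cases h : k = i₀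
    · rw [h, hs₀]; norm_num
    · exact (hexp k hk h).le
  by_cases hii : i = i₀
  · -- then y ∈ Icc (q j₀) (q (j₀+1)), so j = j₀
    have hyIcc : y ∈ Icc (q j₀) (q (j₀+1)) := by
      rw [← him]
      exact ⟨x, by rw [← hii]; exact hxIcc, rfl⟩
    have hjj : j = j₀ := by
      by_contra hne'
      rcases lt_or_gt_of_ne hne' with h | h
      · have : q (j+1) ≤ q j₀ := qmono (j+1) j₀ (by omega) (by omega)
        linarith [hyIcc.1]
      · have : q (j₀+1) ≤ q j := qmono (j₀+1) j (by omega) (by omega)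
        linarith [hyIcc.2]
    have h1 : 1 < |s j| := by rw [hjj]; exact hexp j₀ hj₀ hne
    have h2 : |s i| = 1 := by rw [hii, hs₀]; norm_num
    rw [h2]; linarith
  · have h1 : 1 < |s i| := hexp i hiN hii
    have h2 : 1 ≤ |s j| := habs1 j hjN
    nlinarith [abs_nonneg (s i), abs_nonneg (s j)]
end
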